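/- arXiv:2407.12719 — 8 statements merged into one kernel-verified Lean document; each statement's English description precedes it below -/
import Mathlib

section
/- Let a, b ≥ 1 be integers, let u be a binary word of length a−1 and v a binary word of length b−1. Then C(a+b, a) · d_a(u) · d_b(v) = d_{a+b}(u0v) + d_{a+b}(u1v), where u0v and u1v denote the concatenations of u, a single letter 0 (respectively 1), and v, and C(a+b, a) is the binomial coefficient. -/
/-- For a finite binary word `u` of length `n - 1` (so `n = u.length + 1`), `dCountL u` is
the number of permutations `π` of `{1,…,n}` (modeled as `Fin n`, zero-based) such that for
every `1 ≤ i ≤ n-1`, `π(i) > π(i+1)` iff the `i`-th letter of `u` equals `1` (i.e. `true`). -/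
noncomputable def dCountL (u : List Bool) : ℕ :=
  Nat.card {π : Equiv.Perm (Fin (u.length + 1)) //
    ∀ i : Fin u.length, (π i.succ < π i.castSucc ↔ u.get i = true)}

/-!
Given a set `S` of `a` values in `{1, …, a + b}` and permutations `π`, `σ` of `{1, …, a}` and
`{1, …, b}`, the shuffle `τ` places the elements of `S` in the order `π` on the first `a`
positions and the elements of the complement in the order `σ` on the last `b` positions. The map
`(S, π, σ) ↦ τ` is injective (`S` is the image of the first block), so it is a bijection because
`C(a+b, a) · a! · b! = (a+b)!`. Relabelling values by an increasing map preserves descents, so the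
descents of `τ` within the two blocks are those of `π` and `σ`. The left-hand side therefore counts
the permutations whose descent word is `u ? v` with an unconstrained letter at the junction, and
splitting according to that letter gives the right-hand side.
-/

open Finset Equiv

variable {α β : Type*} [LinearOrder α] [LinearOrder β]

def descents {k : ℕ} (f : Fin (k + 1) → α) : List Bool :=
  List.ofFn fun i : Fin k => decide (f i.succ < f i.castSucc)

@[simp]
lemma length_descents {k : ℕ} (f : Fin (k + 1) → α) : (descents f).length = k := by
  simp [descents]

lemma descents_eq_iff {w : List Bool} (f : Fin (w.length + 1) → α) :
    descents f = w ↔ ∀ i : Fin w.length, (f i.succ < f i.castSucc ↔ w.get i = true) := by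
  simp only [descents, List.ext_get_iff, List.length_ofFn, List.get_ofFn, Fin.forall_iff, true_and]
  refine forall₂_congr fun i hi => ?_
  rw [forall_prop_of_true hi, Bool.eq_iff_iff, decide_eq_true_iff]
  rfl

-- `k` is free so that a word whose length is only propositionally `k` needs no cast.
lemma dCountL_eq_card {w : List Bool} {k : ℕ} (h : w.length = k) :
    dCountL w = #{π : Perm (Fin (k + 1)) | descents ⇑π = w} := by
  subst h
  simp [dCountL, Nat.card_eq_fintype_card, Fintype.card_subtype, descents_eq_iff]

lemma StrictMono.descents_comp {e : α → β} (he : StrictMono e) {k : ℕ} (f : Fin (k + 1) → α) :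
    descents (e ∘ f) = descents f := by
  simp [descents, he.lt_iff_lt]

lemma descents_add {p q : ℕ} (f : Fin (p + 1 + (q + 1)) → α) :
    descents f = descents (f ∘ Fin.castAdd (q + 1)) ++
      decide (f (Fin.natAdd (p + 1) 0) < f (Fin.castAdd (q + 1) (Fin.last p))) ::
        descents (f ∘ Fin.natAdd (p + 1)) := by
  rw [descents, List.ofFn_add, List.ofFn_succ', List.concat_eq_append, List.append_assoc]
  congr 2

lemma descents_eq_append_cons_iff {p q : ℕ} (f : Fin (p + 1 + (q + 1)) → α) {u v : List Bool}
    (hu : u.length = p) (c : Bool) :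
    descents f = u ++ c :: v ↔
      (descents (f ∘ Fin.castAdd (q + 1)) = u ∧ descents (f ∘ Fin.natAdd (p + 1)) = v) ∧
        decide (f (Fin.natAdd (p + 1) 0) < f (Fin.castAdd (q + 1) (Fin.last p))) = c := by
  rw [descents_add]
  constructor
  · intro h
    obtain ⟨hl, hr⟩ := List.append_inj h (by simp [hu])
    obtain ⟨hc, hv⟩ := List.cons_eq_cons.mp hr
    exact ⟨⟨hl, hv⟩, hc⟩
  · rintro ⟨⟨rfl, rfl⟩, rfl⟩
    rfl

section Shuffle

variable {m n : ℕ}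

lemma card_compl_of_card_eq {S : Finset (Fin (m + n))} (hS : #S = m) : #Sᶜ = n := by
  simp [card_compl, hS]

def shuffle (S : {S : Finset (Fin (m + n)) // #S = m}) (π : Perm (Fin m)) (σ : Perm (Fin n)) :
    Perm (Fin (m + n)) :=
  finSumFinEquiv.symm.trans <| (sumCongr π σ).trans <|
    (sumCongr (S.1.orderIsoOfFin S.2).toEquiv
      ((S.1ᶜ.orderIsoOfFin (card_compl_of_card_eq S.2)).toEquiv.trans
        (subtypeEquivRight fun _ => mem_compl))).trans (sumCompl (· ∈ S.1))

variable (S : {S : Finset (Fin (m + n)) // #S = m}) (π : Perm (Fin m)) (σ : Perm (Fin n))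

lemma shuffle_castAdd (i : Fin m) :
    shuffle S π σ (Fin.castAdd n i) = S.1.orderEmbOfFin S.2 (π i) := by
  simp [shuffle]

lemma shuffle_natAdd (j : Fin n) :
    shuffle S π σ (Fin.natAdd m j) = S.1ᶜ.orderEmbOfFin (card_compl_of_card_eq S.2) (σ j) := by
  simp [shuffle]

lemma shuffle_comp_castAdd : shuffle S π σ ∘ Fin.castAdd n = S.1.orderEmbOfFin S.2 ∘ π :=
  funext (shuffle_castAdd S π σ)

lemma shuffle_comp_natAdd :
    shuffle S π σ ∘ Fin.natAdd m = S.1ᶜ.orderEmbOfFin (card_compl_of_card_eq S.2) ∘ σ :=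
  funext (shuffle_natAdd S π σ)

lemma image_shuffle_castAdd : univ.image (shuffle S π σ ∘ Fin.castAdd n) = S.1 := by
  rw [shuffle_comp_castAdd, ← image_image, image_univ_equiv, image_orderEmbOfFin_univ]

variable (m n) in
lemma shuffle_injective :
    Function.Injective fun x : {S : Finset (Fin (m + n)) // #S = m} × Perm (Fin m) × Perm (Fin n) =>
      shuffle x.1 x.2.1 x.2.2 := by
  rintro ⟨S, π, σ⟩ ⟨S', π', σ'⟩ h
  dsimp only at h
  obtain rfl : S = S' := Subtype.ext <| by
    rw [← image_shuffle_castAdd S π σ, ← image_shuffle_castAdd S' π' σ', h]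
  have hπ : π = π' := Equiv.ext fun i => (S.1.orderEmbOfFin S.2).injective <| by
    rw [← shuffle_castAdd, ← shuffle_castAdd, h]
  have hσ : σ = σ' := Equiv.ext fun j => (S.1ᶜ.orderEmbOfFin _).injective <| by
    rw [← shuffle_natAdd, ← shuffle_natAdd, h]
  rw [hπ, hσ]

variable (m n) in
noncomputable def shuffleEquiv :
    {S : Finset (Fin (m + n)) // #S = m} × Perm (Fin m) × Perm (Fin n) ≃ Perm (Fin (m + n)) :=
  .ofBijective _ <| (Fintype.bijective_iff_injective_and_card _).2 ⟨shuffle_injective m n, by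
    simp only [Fintype.card_prod, Fintype.card_finset_len, Fintype.card_perm, Fintype.card_fin]
    rw [Nat.choose_symm_add, ← mul_assoc, Nat.add_choose_mul_factorial_mul_factorial]⟩

end Shuffle

lemma choose_mul_card_descents_mul_card (p q : ℕ) (u v : List Bool) :
    (p + 1 + (q + 1)).choose (p + 1) *
        (#{π : Perm (Fin (p + 1)) | descents ⇑π = u} * #{σ : Perm (Fin (q + 1)) | descents ⇑σ = v}) =
      #{τ : Perm (Fin (p + 1 + (q + 1))) |
        descents (τ ∘ Fin.castAdd (q + 1)) = u ∧ descents (τ ∘ Fin.natAdd (p + 1)) = v} := by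
  have hchoose : (p + 1 + (q + 1)).choose (p + 1) =
      #(univ : Finset {S : Finset (Fin (p + 1 + (q + 1))) // #S = p + 1}) := by
    simp [Fintype.card_finset_len]
  rw [hchoose, ← card_product, ← card_product]
  refine card_equiv (shuffleEquiv (p + 1) (q + 1)) fun ⟨S, π, σ⟩ => ?_
  simp [shuffleEquiv, shuffle_comp_castAdd, shuffle_comp_natAdd,
    (OrderEmbedding.strictMono _).descents_comp]

theorem card_descents_append_cons (u v : List Bool) :
    (u.length + 1 + (v.length + 1)).choose (u.length + 1) *
        (#{π : Perm (Fin (u.length + 1)) | descents ⇑π = u} *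
          #{σ : Perm (Fin (v.length + 1)) | descents ⇑σ = v}) =
      #{τ : Perm (Fin (u.length + 1 + (v.length + 1))) | descents ⇑τ = u ++ false :: v} +
        #{τ : Perm (Fin (u.length + 1 + (v.length + 1))) | descents ⇑τ = u ++ true :: v} := by
  rw [choose_mul_card_descents_mul_card, card_eq_sum_card_fiberwise (t := univ)
    (f := fun τ : Perm (Fin _) => decide (τ (Fin.natAdd _ 0) < τ (Fin.castAdd _ (Fin.last _))))
    (fun _ _ => mem_univ _), Fintype.sum_bool, add_comm]
  simp only [filter_filter, ← descents_eq_append_cons_iff _ rfl]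

theorem stmt3 (a b : ℕ) (ha : 1 ≤ a) (hb : 1 ≤ b) (u v : List Bool)
    (hu : u.length = a - 1) (hv : v.length = b - 1) :
    (a + b).choose a * (dCountL u * dCountL v) =
      dCountL (u ++ false :: v) + dCountL (u ++ true :: v) := by
  obtain rfl : a = u.length + 1 := by omega
  obtain rfl : b = v.length + 1 := by omega
  have hlen (c : Bool) : (u ++ c :: v).length = u.length + 1 + v.length := by
    simp only [List.length_append, List.length_cons]; omega
  rw [dCountL_eq_card rfl, dCountL_eq_card rfl, dCountL_eq_card (hlen false),
    dCountL_eq_card (hlen true)]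
  exact card_descents_append_cons u v
end

section
/- Let w be an infinite binary word and n ≥ 1. Suppose the positions i with 1 ≤ i ≤ n−1 and w_i = 1 are exactly i_1 < i_2 < ⋯ < i_k. Then d_n(w) = Σ_{r=0}^{k} (−1)^{k−r} · C(n, i_r) · d_{i_r}(w), where by convention i_0 = 0 and d_0(w) = 1, and C(n, i) is the binomial coefficient. -/
open Filter

/-- `dCount w n` is the number of permutations `π` of `{1,…,n}` (modeled as `Fin n`,
zero-based) such that for every `1 ≤ i ≤ n-1`, `π(i) > π(i+1)` iff the `i`-th letter of the
infinite binary word `w` (1-indexed, `w 0` is irrelevant) equals `1` (i.e. `true`). -/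
noncomputable def dCount (w : ℕ → Bool) (n : ℕ) : ℕ :=
  Nat.card {π : Equiv.Perm (Fin n) //
    ∀ i : ℕ, ∀ h : i + 1 < n,
      (π ⟨i + 1, h⟩ < π ⟨i, Nat.lt_of_succ_lt h⟩ ↔ w (i + 1) = true)}

/-!
Let `m` be the largest `i < n` with `w i = true` and `w'` the word `w` with that letter set to
`false`. Choosing an `m`-set of values for the first `m` places, arranging them according to
`w` and putting the remaining values in increasing order produces each permutation compatible
with `w` or with `w'` exactly once (which of the two depends on whether place `m` is a descent),
so `C(n, m) d_m(w) = d_n(w) + d_n(w')`. Since `w'` has one such letter fewer, induction on their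
number gives the alternating sum.
-/

open Equiv Finset

theorem sum_range_neg_one_pow_succ_sub_mul {R : Type*} [Ring R] (f : ℕ → R) (k : ℕ) :
    ∑ r ∈ range (k + 1), (-1 : R) ^ (k + 1 - r) * f r =
      -∑ r ∈ range (k + 1), (-1 : R) ^ (k - r) * f r := by
  rw [← sum_neg_distrib]
  refine sum_congr rfl fun r hr ↦ ?_
  rw [Nat.sub_add_comm (mem_range_succ_iff.1 hr), pow_succ, mul_neg_one, neg_mul]

theorem Fin.strictMono_of_lt_add_one {α : Type*} [Preorder α] {N : ℕ} {f : Fin N → α}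
    (h : ∀ i (hi : i + 1 < N), f ⟨i, by omega⟩ < f ⟨i + 1, hi⟩) : StrictMono f := by
  cases N with
  | zero => exact fun a ↦ a.elim0
  | succ N => exact Fin.strictMono_iff_lt_succ.2 fun i ↦ h i (by omega)

namespace DescentWord

variable {n m : ℕ}

def MatchesBelow (w : ℕ → Bool) (m : ℕ) (π : Perm (Fin n)) : Prop :=
  ∀ i (h : i + 1 < n), i + 1 < m → (π ⟨i + 1, h⟩ < π ⟨i, by omega⟩ ↔ w (i + 1) = true)

def AscendsFrom (m : ℕ) (π : Perm (Fin n)) : Prop :=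
  ∀ i (h : i + 1 < n), m ≤ i → π ⟨i, by omega⟩ < π ⟨i + 1, h⟩

theorem dCount_eq_card_matchesBelow (w : ℕ → Bool) (n : ℕ) :
    dCount w n = Nat.card {π : Perm (Fin n) // MatchesBelow w n π} :=
  Nat.card_congr <| subtypeEquivRight fun _ ↦
    ⟨fun h i hi _ ↦ h i hi, fun h i hi ↦ h i hi hi⟩

theorem dCount_zero (w : ℕ → Bool) : dCount w 0 = 1 := by
  rw [dCount, Nat.card_eq_one_iff_unique]
  exact ⟨inferInstance, ⟨⟨1, fun i h ↦ absurd h (by omega)⟩⟩⟩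

theorem matchesBelow_congr {w w' : ℕ → Bool} {π : Perm (Fin n)}
    (h : ∀ j, 1 ≤ j → j < m → w j = w' j) : MatchesBelow w m π ↔ MatchesBelow w' m π :=
  forall_congr' fun i ↦ forall_congr' fun hi ↦ forall_congr' fun him ↦ by
    rw [h (i + 1) (by omega) him]

theorem dCount_congr {w w' : ℕ → Bool} (h : ∀ j, 1 ≤ j → j < n → w j = w' j) :
    dCount w n = dCount w' n := by
  rw [dCount_eq_card_matchesBelow, dCount_eq_card_matchesBelow]
  exact Nat.card_congr <| subtypeEquivRight fun _ ↦ matchesBelow_congr h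

theorem dCount_update_of_le (w : ℕ → Bool) {j : ℕ} (b : Bool) (hj : j ≤ m) :
    dCount (Function.update w m b) j = dCount w j :=
  dCount_congr fun _ _ hi ↦ Function.update_of_ne (by omega) _ _

theorem apply_succ_lt_iff_iff_of_eq_false {w : ℕ → Bool} (π : Perm (Fin n)) (i : ℕ)
    (h : i + 1 < n) (hw : w (i + 1) = false) :
    (π ⟨i + 1, h⟩ < π ⟨i, by omega⟩ ↔ w (i + 1) = true) ↔ π ⟨i, by omega⟩ < π ⟨i + 1, h⟩ := by
  have hne : π ⟨i, by omega⟩ ≠ π ⟨i + 1, h⟩ := π.injective.ne (by simp)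
  rw [hw, Bool.false_eq_true, iff_false, not_lt, le_iff_lt_or_eq, or_iff_left hne]

theorem matchesBelow_iff_of_forall_eq_false {w : ℕ → Bool} {k : ℕ} (hk : k + 1 < n)
    (hlarge : ∀ j, k + 1 < j → j < n → w j = false) (π : Perm (Fin n)) :
    MatchesBelow w n π ↔ MatchesBelow w (k + 1) π ∧
      (π ⟨k + 1, hk⟩ < π ⟨k, by omega⟩ ↔ w (k + 1) = true) ∧ AscendsFrom (k + 1) π := by
  refine ⟨fun H ↦ ⟨fun i h _ ↦ H i h h, H k hk hk, fun i h hi ↦ ?_⟩, fun ⟨H, Hk, Ht⟩ i h _ ↦ ?_⟩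
  · exact (apply_succ_lt_iff_iff_of_eq_false π i h (hlarge _ (by omega) h)).1 (H i h h)
  · rcases lt_trichotomy (i + 1) (k + 1) with hi | hi | hi
    · exact H i h hi
    · obtain rfl : i = k := by omega
      exact Hk
    · exact (apply_succ_lt_iff_iff_of_eq_false π i h (hlarge _ hi h)).2 (Ht i h (by omega))

theorem card_compl_of_card_eq {S : Finset (Fin n)} (hS : #S = m) :
    #Sᶜ = n - m := by
  rw [card_compl, hS, Fintype.card_fin]

/-- The first `m` places list `S` in the relative order `σ`, the others list `Sᶜ` increasingly. -/
def ofHeadSet (hm : m ≤ n) (S : Finset (Fin n)) (hS : #S = m) (σ : Perm (Fin m)) :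
    Perm (Fin n) :=
  ((finCongr (Nat.add_sub_cancel' hm).symm).trans finSumFinEquiv.symm).trans <|
    (sumCongr (σ.trans (S.orderIsoOfFin hS).toEquiv)
      ((Sᶜ.orderIsoOfFin (card_compl_of_card_eq hS)).toEquiv.trans
        (subtypeEquivRight fun _ ↦ mem_compl))).trans
      (sumCompl (· ∈ S))

section OfHeadSet

variable (hm : m ≤ n) (S : Finset (Fin n)) (hS : #S = m) (σ : Perm (Fin m))

theorem ofHeadSet_apply_of_lt (i : Fin n) (hi : (i : ℕ) < m) :
    ofHeadSet hm S hS σ i = S.orderEmbOfFin hS (σ ⟨i, hi⟩) := by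
  have : finSumFinEquiv.symm (Fin.cast (Nat.add_sub_cancel' hm).symm i) = Sum.inl ⟨i, hi⟩ := by
    rw [Equiv.symm_apply_eq, finSumFinEquiv_apply_left]
    rfl
  simp [ofHeadSet, this]

theorem ofHeadSet_apply_of_le (i : Fin n) (hi : m ≤ (i : ℕ)) :
    ofHeadSet hm S hS σ i =
      Sᶜ.orderEmbOfFin (card_compl_of_card_eq hS) ⟨i - m, by omega⟩ := by
  have : finSumFinEquiv.symm (Fin.cast (Nat.add_sub_cancel' hm).symm i) =
      Sum.inr ⟨i - m, by omega⟩ := by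
    rw [Equiv.symm_apply_eq, finSumFinEquiv_apply_right]
    ext
    simp only [Fin.val_cast, Fin.natAdd_mk]
    omega
  simp [ofHeadSet, this]

theorem ofHeadSet_mem (i : Fin n) (hi : (i : ℕ) < m) : ofHeadSet hm S hS σ i ∈ S := by
  rw [ofHeadSet_apply_of_lt hm S hS σ i hi]
  exact orderEmbOfFin_mem S hS _

theorem ofHeadSet_lt_ofHeadSet_iff (i j : Fin n) (hi : (i : ℕ) < m) (hj : (j : ℕ) < m) :
    ofHeadSet hm S hS σ i < ofHeadSet hm S hS σ j ↔ σ ⟨i, hi⟩ < σ ⟨j, hj⟩ := by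
  rw [ofHeadSet_apply_of_lt hm S hS σ i hi, ofHeadSet_apply_of_lt hm S hS σ j hj,
    OrderEmbedding.lt_iff_lt]

theorem ascendsFrom_ofHeadSet : AscendsFrom m (ofHeadSet hm S hS σ) := by
  intro i h hi
  rw [ofHeadSet_apply_of_le hm S hS σ _ hi, ofHeadSet_apply_of_le hm S hS σ _ (by simp; omega),
    OrderEmbedding.lt_iff_lt, Fin.mk_lt_mk]
  simp only
  omega

theorem matchesBelow_ofHeadSet_iff (w : ℕ → Bool) :
    MatchesBelow w m (ofHeadSet hm S hS σ) ↔ MatchesBelow w m σ := by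
  refine forall_congr' fun i ↦ ⟨fun H h _ ↦ ?_, fun H _ h ↦ ?_⟩
  · exact (ofHeadSet_lt_ofHeadSet_iff hm S hS σ ⟨i + 1, by omega⟩ _ h (by simp; omega)).symm.trans
      (H _ h)
  · exact (ofHeadSet_lt_ofHeadSet_iff hm S hS σ _ _ h (by simp; omega)).trans (H h h)

theorem image_ofHeadSet_castLE :
    univ.image (fun z : Fin m ↦ ofHeadSet hm S hS σ (Fin.castLE hm z)) = S := by
  refine eq_of_subset_of_card_le (fun x hx ↦ ?_) ?_
  · obtain ⟨z, -, rfl⟩ := mem_image.1 hx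
    exact ofHeadSet_mem hm S hS σ _ z.isLt
  · rw [card_image_of_injective univ fun a b hab ↦
      Fin.castLE_injective hm ((ofHeadSet hm S hS σ).injective hab), hS, card_univ,
      Fintype.card_fin]

variable {S σ} in
theorem ofHeadSet_inj {T : Finset (Fin n)} {hT : #T = m} {τ : Perm (Fin m)}
    (h : ofHeadSet hm S hS σ = ofHeadSet hm T hT τ) : S = T ∧ σ = τ := by
  obtain rfl : S = T := by
    rw [← image_ofHeadSet_castLE hm S hS σ, h, image_ofHeadSet_castLE]
  refine ⟨rfl, Equiv.ext fun z ↦ (S.orderEmbOfFin hS).injective ?_⟩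
  have := DFunLike.congr_fun h (Fin.castLE hm z)
  rwa [ofHeadSet_apply_of_lt hm S hS σ _ z.isLt, ofHeadSet_apply_of_lt hm S hT τ _ z.isLt] at this

theorem exists_ofHeadSet_eq {π : Perm (Fin n)} (hπ : AscendsFrom m π) :
    ∃ S hS σ, ofHeadSet hm S hS σ = π := by
  classical
  set S := univ.image fun z : Fin m ↦ π (Fin.castLE hm z)
  have hS : #S = m := by
    rw [card_image_of_injective univ fun a b hab ↦ Fin.castLE_injective hm (π.injective hab)]
    simp
  have head_mem (z : Fin m) : π (Fin.castLE hm z) ∈ S := mem_image_of_mem _ (mem_univ z)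
  let σ : Perm (Fin m) := Equiv.ofBijective (fun z ↦ (S.orderIsoOfFin hS).symm ⟨_, head_mem z⟩) <|
    Finite.injective_iff_bijective.1 fun a b hab ↦
      Fin.castLE_injective hm (π.injective (Subtype.ext_iff.1 ((OrderIso.injective _) hab)))
  have tail_mem (j : Fin (n - m)) : π ⟨m + j, by omega⟩ ∈ Sᶜ := by
    refine mem_compl.2 fun hj ↦ ?_
    obtain ⟨z, -, hz⟩ := mem_image.1 hj
    have : (z : ℕ) = m + j := congrArg Fin.val (π.injective hz)
    omega
  have tail_eq : (fun j : Fin (n - m) ↦ π ⟨m + j, by omega⟩) =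
      Sᶜ.orderEmbOfFin (card_compl_of_card_eq hS) :=
    orderEmbOfFin_unique _ tail_mem <| Fin.strictMono_of_lt_add_one fun i hi ↦
      hπ (m + i) (by omega) (by omega)
  refine ⟨S, hS, σ, Equiv.ext fun i ↦ ?_⟩
  rcases lt_or_ge (i : ℕ) m with hi | hi
  · rw [ofHeadSet_apply_of_lt hm S hS σ i hi, ← coe_orderIsoOfFin_apply]
    simp [σ]
  · rw [ofHeadSet_apply_of_le hm S hS σ i hi, ← tail_eq]
    exact congrArg π (Fin.ext (by simp only; omega))

end OfHeadSet

theorem card_matchesBelow_ascendsFrom (w : ℕ → Bool) (hm : m ≤ n) :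
    Nat.card {π : Perm (Fin n) // MatchesBelow w m π ∧ AscendsFrom m π} =
      n.choose m * dCount w m := by
  let Φ : {S : Finset (Fin n) // #S = m} × {σ : Perm (Fin m) // MatchesBelow w m σ} →
      {π : Perm (Fin n) // MatchesBelow w m π ∧ AscendsFrom m π} := fun p ↦
    ⟨ofHeadSet hm p.1 p.1.2 p.2, (matchesBelow_ofHeadSet_iff ..).2 p.2.2,
      ascendsFrom_ofHeadSet hm _ _ _⟩
  have hΦ : Φ.Bijective := by
    refine ⟨fun ⟨⟨S, hS⟩, σ, _⟩ ⟨⟨T, hT⟩, τ, _⟩ h ↦ ?_, fun ⟨π, hπ, hπ'⟩ ↦ ?_⟩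
    · obtain ⟨rfl, rfl⟩ := ofHeadSet_inj hm hS (congrArg Subtype.val h)
      rfl
    · obtain ⟨S, hS, σ, rfl⟩ := exists_ofHeadSet_eq hm hπ'
      exact ⟨⟨⟨S, hS⟩, σ, (matchesBelow_ofHeadSet_iff ..).1 hπ⟩, rfl⟩
  rw [← Nat.card_eq_of_bijective Φ hΦ, Nat.card_prod, dCount_eq_card_matchesBelow,
    Nat.card_eq_fintype_card, Fintype.card_finset_len, Fintype.card_fin]

theorem dCount_eq_one_of_forall_eq_false {w : ℕ → Bool}
    (h : ∀ j, 1 ≤ j → j < n → w j = false) : dCount w n = 1 := by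
  rw [dCount_eq_card_matchesBelow, ← Nat.choose_zero_right n, ← mul_one (n.choose 0),
    ← dCount_zero w, ← card_matchesBelow_ascendsFrom w n.zero_le]
  refine Nat.card_congr <| subtypeEquivRight fun π ↦
    ⟨fun H ↦ ⟨fun i _ hi ↦ absurd hi (by omega), fun i hi _ ↦ ?_⟩, fun H i hi _ ↦ ?_⟩
  · exact (apply_succ_lt_iff_iff_of_eq_false π i hi (h _ (by omega) hi)).1 (H i hi hi)
  · exact (apply_succ_lt_iff_iff_of_eq_false π i hi (h _ (by omega) hi)).2 (H.2 i hi (by omega))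

theorem choose_mul_dCount_eq_add {w : ℕ → Bool} (hm : 1 ≤ m) (hmn : m < n) (hwm : w m = true)
    (hlarge : ∀ j, m < j → j < n → w j = false) :
    n.choose m * dCount w m = dCount w n + dCount (Function.update w m false) n := by
  classical
  obtain ⟨k, rfl⟩ : ∃ k, m = k + 1 := ⟨m - 1, by omega⟩
  set w' := Function.update w (k + 1) false
  have hw' : ∀ j, j ≠ k + 1 → w' j = w j := fun j hj ↦ Function.update_of_ne hj _ _
  have hlarge' : ∀ j, k + 1 < j → j < n → w' j = false := fun j hj hjn ↦
    (hw' j (by omega)).trans (hlarge j hj hjn)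
  have hdisj : Disjoint (MatchesBelow (n := n) w n) (MatchesBelow w' n) := by
    refine fun p hp hp' π hπ ↦ ?_
    have H := hp π hπ
    have H' := hp' π hπ
    have := ((matchesBelow_iff_of_forall_eq_false hmn hlarge π).1 H).2.1
    have := ((matchesBelow_iff_of_forall_eq_false hmn hlarge' π).1 H').2.1
    simp_all [w']
  rw [← card_matchesBelow_ascendsFrom w hmn.le, dCount_eq_card_matchesBelow,
    dCount_eq_card_matchesBelow, ← Nat.card_sum, ← Nat.card_congr (subtypeOrEquiv _ _ hdisj)]
  refine Nat.card_congr <| subtypeEquivRight fun π ↦ ?_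
  rw [matchesBelow_iff_of_forall_eq_false hmn hlarge,
    matchesBelow_iff_of_forall_eq_false hmn hlarge', matchesBelow_congr (w' := w) fun j _ hj ↦
      hw' j (by omega)]
  simp only [hwm, w', Function.update_self]
  tauto

structure IsDescentEnumeration (w : ℕ → Bool) (n k : ℕ) (idx : ℕ → ℕ) : Prop where
  lt_succ : ∀ r, r < k → idx r < idx (r + 1)
  mem : ∀ r, 1 ≤ r → r ≤ k → 1 ≤ idx r ∧ idx r ≤ n - 1 ∧ w (idx r) = true
  exists_eq : ∀ j, 1 ≤ j → j ≤ n - 1 → w j = true → ∃ r, 1 ≤ r ∧ r ≤ k ∧ idx r = j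

namespace IsDescentEnumeration

variable {w : ℕ → Bool} {n k : ℕ} {idx : ℕ → ℕ}

theorem strictMonoOn (h : IsDescentEnumeration w n k idx) : StrictMonoOn idx (Set.Iic k) :=
  strictMonoOn_Iic_of_lt_succ h.lt_succ

theorem eq_false_of_zero (h : IsDescentEnumeration w n 0 idx) :
    ∀ j, 1 ≤ j → j < n → w j = false := fun j hj hjn ↦ by
  by_contra hw
  obtain ⟨r, hr, hr0, -⟩ := h.exists_eq j hj (by omega) (by simpa using hw)
  omega

theorem eq_false_of_last_lt (h : IsDescentEnumeration w n (k + 1) idx) :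
    ∀ j, idx (k + 1) < j → j < n → w j = false := fun j hj hjn ↦ by
  by_contra hw
  obtain ⟨r, -, hrk, rfl⟩ := h.exists_eq j (by omega) (by omega) (by simpa using hw)
  exact hj.not_ge ((h.strictMonoOn.le_iff_le hrk Set.self_mem_Iic).2 hrk)

theorem lt_last (h : IsDescentEnumeration w n (k + 1) idx) {r : ℕ} (hr : r ≤ k) :
    idx r < idx (k + 1) :=
  h.strictMonoOn (Set.mem_Iic.2 (by omega)) Set.self_mem_Iic (by omega)

theorem update_last (h : IsDescentEnumeration w n (k + 1) idx) :
    IsDescentEnumeration (Function.update w (idx (k + 1)) false) n k idx where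
  lt_succ r hr := h.lt_succ r (by omega)
  mem r hr hrk := by
    obtain ⟨h1, h2, h3⟩ := h.mem r hr (by omega)
    exact ⟨h1, h2, by rwa [Function.update_of_ne (h.lt_last hrk).ne]⟩
  exists_eq j hj hjn hw := by
    have hj' : j ≠ idx (k + 1) := by
      rintro rfl
      simp at hw
    obtain ⟨r, hr, hrk, rfl⟩ := h.exists_eq j hj hjn (by rwa [Function.update_of_ne hj'] at hw)
    exact ⟨r, hr, by_contra fun hrk' ↦ hj' (by rw [show r = k + 1 by omega]), rfl⟩

end IsDescentEnumeration

end DescentWord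

open DescentWord

theorem stmt4_general (w : ℕ → Bool) (n k : ℕ) (idx : ℕ → ℕ)
    (h0 : idx 0 = 0)
    (hmono : ∀ r : ℕ, r < k → idx r < idx (r + 1))
    (hmem : ∀ r : ℕ, 1 ≤ r → r ≤ k → 1 ≤ idx r ∧ idx r ≤ n - 1 ∧ w (idx r) = true)
    (hall : ∀ j : ℕ, 1 ≤ j → j ≤ n - 1 → w j = true → ∃ r : ℕ, 1 ≤ r ∧ r ≤ k ∧ idx r = j) :
    (dCount w n : ℤ) =
      ∑ r ∈ Finset.range (k + 1),
        (-1) ^ (k - r) * (n.choose (idx r) : ℤ) * (dCount w (idx r) : ℤ) := by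
  have hw : IsDescentEnumeration w n k idx := ⟨hmono, hmem, hall⟩
  clear hmono hmem hall
  induction k generalizing w with
  | zero => simp [h0, dCount_zero, dCount_eq_one_of_forall_eq_false hw.eq_false_of_zero]
  | succ k ih =>
    obtain ⟨hm, hmn, hwm⟩ := hw.mem (k + 1) (by omega) le_rfl
    have hsplit := choose_mul_dCount_eq_add hm (by omega) hwm hw.eq_false_of_last_lt
    have ih' := ih _ hw.update_last
    rw [sum_congr rfl fun r hr ↦ by
      rw [dCount_update_of_le w false (hw.lt_last (mem_range_succ_iff.1 hr)).le]] at ih'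
    simp_rw [mul_assoc] at ih' ⊢
    rw [sum_range_succ, sum_range_neg_one_pow_succ_sub_mul, ← ih', Nat.sub_self, pow_zero,
      one_mul]
    zify at hsplit
    linear_combination -hsplit

theorem stmt4 (w : ℕ → Bool) (n k : ℕ) (hn : 1 ≤ n) (idx : ℕ → ℕ)
    (h0 : idx 0 = 0)
    (hmono : ∀ r : ℕ, r < k → idx r < idx (r + 1))
    (hmem : ∀ r : ℕ, 1 ≤ r → r ≤ k → 1 ≤ idx r ∧ idx r ≤ n - 1 ∧ w (idx r) = true)
    (hall : ∀ j : ℕ, 1 ≤ j → j ≤ n - 1 → w j = true → ∃ r : ℕ, 1 ≤ r ∧ r ≤ k ∧ idx r = j) :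
    (dCount w n : ℤ) =
      ∑ r ∈ Finset.range (k + 1),
        (-1) ^ (k - r) * (n.choose (idx r) : ℤ) * (dCount w (idx r) : ℤ) :=
  stmt4_general w n k idx h0 hmono hmem hall
end

section
/- Let n ≥ 2 and k ≥ 1, and let u be a binary word of length n−1 whose last letter is 0. Let v be the binary word of length k with v_i = 1 for i odd and v_i = 0 for i even. Then d_{n+k}(u v) ≥ (1/2) · C(n+k, k) · E_k · d_n(u), where u v denotes the concatenation of u and v, C(n+k, k) is the binomial coefficient, and E_k is the number of alternating permutations of {1,…,k}. -/
open Equiv Finset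

lemma fin_mk_ne {n a b : ℕ} (ha : a < n) (hb : b < n) (h : a ≠ b) :
    (⟨a, ha⟩ : Fin n) ≠ ⟨b, hb⟩ := by
  simp only [ne_eq, Fin.mk.injEq]; exact h

lemma lt_congr {n : ℕ} {a b c d : Fin n} (h1 : a = c) (h2 : b = d) :
    (a < b ↔ c < d) := by rw [h1, h2]

lemma card_split {α : Type*} [Fintype α] (P Q : α → Prop) :
    Nat.card {x // P x ∧ Q x} + Nat.card {x // P x ∧ ¬ Q x} = Nat.card {x // P x} := by
  classical
  simp only [Nat.card_eq_fintype_card, Fintype.card_subtype]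
  rw [← Finset.card_filter_add_card_filter_not (s := Finset.univ.filter P) (p := Q)]
  congr 1 <;> rw [Finset.filter_filter]

section Split
variable (p q : ℕ)

lemma compl_card {S : Finset (Fin (p+q))} (hS : S.card = p) : Sᶜ.card = q := by
  rw [Finset.card_compl, hS, Fintype.card_fin, Nat.add_sub_cancel_left]

noncomputable def sFun (S : Finset (Fin (p+q))) (hS : S.card = p)
    (σ : Equiv.Perm (Fin p)) (τ : Equiv.Perm (Fin q)) : Fin (p+q) → Fin (p+q) :=
  fun x => if h : (x : ℕ) < p
    then (S.orderIsoOfFin hS (σ ⟨x, h⟩) : Fin (p+q))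
    else (Sᶜ.orderIsoOfFin (compl_card p q hS) (τ ⟨(x : ℕ) - p, by have := x.isLt; omega⟩) : Fin (p+q))

lemma sFun_apply_lt (S : Finset (Fin (p+q))) (hS : S.card = p)
    (σ : Equiv.Perm (Fin p)) (τ : Equiv.Perm (Fin q)) {i : ℕ} (h : i < p) (h' : i < p + q) :
    sFun p q S hS σ τ ⟨i, h'⟩ = (S.orderIsoOfFin hS (σ ⟨i, h⟩) : Fin (p+q)) := by
  simp [sFun, h]

lemma sFun_apply_ge (S : Finset (Fin (p+q))) (hS : S.card = p)
    (σ : Equiv.Perm (Fin p)) (τ : Equiv.Perm (Fin q)) {j : ℕ} (h : j < q) (h' : p + j < p + q) :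
    sFun p q S hS σ τ ⟨p + j, h'⟩ = (Sᶜ.orderIsoOfFin (compl_card p q hS) (τ ⟨j, h⟩) : Fin (p+q)) := by
  have h1 : ¬ (p + j < p) := by omega
  simp only [sFun, dif_neg h1, Nat.add_sub_cancel_left]

lemma sFun_injective (S : Finset (Fin (p+q))) (hS : S.card = p)
    (σ : Equiv.Perm (Fin p)) (τ : Equiv.Perm (Fin q)) :
    Function.Injective (sFun p q S hS σ τ) := by
  intro x y hxy
  by_cases hx : (x : ℕ) < p <;> by_cases hy : (y : ℕ) < p
  · simp only [sFun, dif_pos hx, dif_pos hy] at hxy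
    have := σ.injective ((S.orderIsoOfFin hS).injective (Subtype.coe_injective hxy))
    rw [Fin.mk.injEq] at this
    exact Fin.ext this
  · exfalso
    simp only [sFun, dif_pos hx, dif_neg hy] at hxy
    have h1 : (S.orderIsoOfFin hS (σ ⟨x, hx⟩) : Fin (p+q)) ∈ S := (S.orderIsoOfFin hS _).2
    have h2 : (Sᶜ.orderIsoOfFin (compl_card p q hS)
        (τ ⟨(y:ℕ) - p, by have := y.isLt; omega⟩) : Fin (p+q)) ∈ Sᶜ :=
      (Sᶜ.orderIsoOfFin (compl_card p q hS) _).2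
    rw [hxy] at h1
    exact (Finset.mem_compl.mp h2) h1
  · exfalso
    simp only [sFun, dif_neg hx, dif_pos hy] at hxy
    have h1 : (S.orderIsoOfFin hS (σ ⟨y, hy⟩) : Fin (p+q)) ∈ S := (S.orderIsoOfFin hS _).2
    have h2 : (Sᶜ.orderIsoOfFin (compl_card p q hS)
        (τ ⟨(x:ℕ) - p, by have := x.isLt; omega⟩) : Fin (p+q)) ∈ Sᶜ :=
      (Sᶜ.orderIsoOfFin (compl_card p q hS) _).2
    rw [hxy] at h2
    exact (Finset.mem_compl.mp h2) h1
  · simp only [sFun, dif_neg hx, dif_neg hy] at hxy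
    have := τ.injective ((Sᶜ.orderIsoOfFin (compl_card p q hS)).injective (Subtype.coe_injective hxy))
    have hv : (x : ℕ) - p = (y : ℕ) - p := congrArg Fin.val this
    exact Fin.ext (by omega)

noncomputable def sPerm (S : Finset (Fin (p+q))) (hS : S.card = p)
    (σ : Equiv.Perm (Fin p)) (τ : Equiv.Perm (Fin q)) : Equiv.Perm (Fin (p+q)) :=
  Equiv.ofBijective _ (Finite.injective_iff_bijective.mp (sFun_injective p q S hS σ τ))

lemma sPerm_apply (S : Finset (Fin (p+q))) (hS : S.card = p)
    (σ : Equiv.Perm (Fin p)) (τ : Equiv.Perm (Fin q)) (x : Fin (p+q)) :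
    sPerm p q S hS σ τ x = sFun p q S hS σ τ x := rfl

lemma mem_S_iff (S : Finset (Fin (p+q))) (hS : S.card = p)
    (σ : Equiv.Perm (Fin p)) (τ : Equiv.Perm (Fin q)) (x : Fin (p+q)) :
    x ∈ S ↔ ∃ i : ℕ, ∃ h : i < p, sFun p q S hS σ τ ⟨i, by omega⟩ = x := by
  constructor
  · intro hx
    refine ⟨(σ.symm ((S.orderIsoOfFin hS).symm ⟨x, hx⟩) : Fin p), (σ.symm _).isLt, ?_⟩
    rw [sFun_apply_lt p q S hS σ τ (σ.symm ((S.orderIsoOfFin hS).symm ⟨x, hx⟩)).isLt]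
    simp
  · rintro ⟨i, h, rfl⟩
    rw [sFun_apply_lt p q S hS σ τ h]
    exact (S.orderIsoOfFin hS _).2
end Split

section Split2
variable (p q : ℕ) (S : Finset (Fin (p+q))) (hS : S.card = p)
    (σ : Equiv.Perm (Fin p)) (τ : Equiv.Perm (Fin q))

lemma sPerm_lt_left {a b : ℕ} (ha : a < p) (hb : b < p) (ha' : a < p+q) (hb' : b < p+q) :
    (sPerm p q S hS σ τ ⟨a, ha'⟩ < sPerm p q S hS σ τ ⟨b, hb'⟩ ↔ σ ⟨a, ha⟩ < σ ⟨b, hb⟩) := by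
  rw [sPerm_apply, sPerm_apply, sFun_apply_lt p q S hS σ τ ha, sFun_apply_lt p q S hS σ τ hb,
    Subtype.coe_lt_coe, OrderIso.lt_iff_lt]

lemma sPerm_lt_right {a b : ℕ} (ha : p ≤ a) (hb : p ≤ b) (ha' : a < p+q) (hb' : b < p+q) :
    (sPerm p q S hS σ τ ⟨a, ha'⟩ < sPerm p q S hS σ τ ⟨b, hb'⟩ ↔
      τ ⟨a - p, by omega⟩ < τ ⟨b - p, by omega⟩) := by
  rw [sPerm_apply, sPerm_apply]
  simp only [sFun, dif_neg (show ¬ a < p by omega), dif_neg (show ¬ b < p by omega)]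
  rw [Subtype.coe_lt_coe, OrderIso.lt_iff_lt]

end Split2

section Split3
variable (p q : ℕ) (c1 c2 : ℕ → Bool)

noncomputable def Phi
    (t : {S : Finset (Fin (p+q)) // S.card = p} ×
         {σ : Equiv.Perm (Fin p) // ∀ i, (h : i+1 < p) →
            (σ ⟨i+1, h⟩ < σ ⟨i, by omega⟩ ↔ c1 i = true)} ×
         {τ : Equiv.Perm (Fin q) // ∀ j, (h : j+1 < q) →
            (τ ⟨j+1, h⟩ < τ ⟨j, by omega⟩ ↔ c2 j = true)}) :
    {π : Equiv.Perm (Fin (p+q)) //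
       (∀ i, (h : i+1 < p) → (π ⟨i+1, by omega⟩ < π ⟨i, by omega⟩ ↔ c1 i = true)) ∧
       (∀ j, (h : j+1 < q) → (π ⟨p+j+1, by omega⟩ < π ⟨p+j, by omega⟩ ↔ c2 j = true))} := by
  refine ⟨sPerm p q t.1.1 t.1.2 t.2.1.1 t.2.2.1, ?_, ?_⟩
  · intro i h
    rw [sPerm_lt_left p q t.1.1 t.1.2 t.2.1.1 t.2.2.1 h (by omega)]
    exact t.2.1.2 i h
  · intro j h
    have e : (⟨p+j+1, by omega⟩ : Fin (p+q)) = ⟨p+(j+1), by omega⟩ := rfl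
    rw [e, sPerm_lt_right p q t.1.1 t.1.2 t.2.1.1 t.2.2.1 (by omega) (by omega)]
    have e1 : (⟨p+(j+1) - p, by omega⟩ : Fin q) = ⟨j+1, h⟩ := by
      simp only [Fin.mk.injEq]; omega
    have e2 : (⟨p+j - p, by omega⟩ : Fin q) = ⟨j, by omega⟩ := by
      simp only [Fin.mk.injEq]; omega
    rw [e1, e2]
    exact t.2.2.2 j h

end Split3

lemma Phi_injective (p q : ℕ) (c1 c2 : ℕ → Bool) :
    Function.Injective (Phi p q c1 c2) := by
  rintro ⟨⟨S, hS⟩, ⟨σ, hσ⟩, ⟨τ, hτ⟩⟩ ⟨⟨S', hS'⟩, ⟨σ', hσ'⟩, ⟨τ', hτ'⟩⟩ heq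
  have hfun : ∀ x, sFun p q S hS σ τ x = sFun p q S' hS' σ' τ' x := by
    intro x
    have := Subtype.ext_iff.mp heq
    exact Equiv.ext_iff.mp this x
  have hSS : S = S' := by
    ext x
    rw [mem_S_iff p q S hS σ τ x, mem_S_iff p q S' hS' σ' τ' x]
    constructor
    · rintro ⟨i, h, he⟩; exact ⟨i, h, by rw [← hfun]; exact he⟩
    · rintro ⟨i, h, he⟩; exact ⟨i, h, by rw [hfun]; exact he⟩
  subst hSS
  have hpf : hS = hS' := Subsingleton.elim _ _
  subst hpf
  have hσσ : σ = σ' := by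
    apply Equiv.ext
    intro a
    have := hfun ⟨(a : ℕ), by have := a.isLt; omega⟩
    simp only [sFun, dif_pos a.isLt] at this
    have h3 := (S.orderIsoOfFin hS).injective (Subtype.coe_injective this)
    have h4 : σ ⟨(a:ℕ), a.isLt⟩ = σ' ⟨(a:ℕ), a.isLt⟩ := h3
    simpa using h4
  subst hσσ
  have hττ : τ = τ' := by
    apply Equiv.ext
    intro b
    have := hfun ⟨p + (b : ℕ), by have := b.isLt; omega⟩
    simp only [sFun, dif_neg (show ¬ p + (b:ℕ) < p by omega), Nat.add_sub_cancel_left] at this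
    have h3 := (Sᶜ.orderIsoOfFin (compl_card p q hS)).injective (Subtype.coe_injective this)
    have h4 : τ ⟨(b:ℕ), b.isLt⟩ = τ' ⟨(b:ℕ), b.isLt⟩ := h3
    simpa using h4
  subst hττ
  rfl

lemma Phi_surjective (p q : ℕ) (c1 c2 : ℕ → Bool) :
    Function.Surjective (Phi p q c1 c2) := by
  rintro ⟨π, hπ1, hπ2⟩
  set f0 : Fin p → Fin (p+q) := fun a => π (Fin.castLE (Nat.le_add_right p q) a) with hf0
  have hinj : Function.Injective f0 := π.injective.comp (Fin.castLE_injective _)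
  set S : Finset (Fin (p+q)) := Finset.image f0 Finset.univ with hSdef
  have hS : S.card = p := by
    rw [hSdef, Finset.card_image_of_injective _ hinj, Finset.card_univ, Fintype.card_fin]
  have hmem1 : ∀ a : Fin p, f0 a ∈ S := fun a => Finset.mem_image_of_mem _ (Finset.mem_univ a)
  have hmem2 : ∀ b : Fin q, π ⟨p + (b:ℕ), by have := b.isLt; omega⟩ ∈ Sᶜ := by
    intro b
    rw [Finset.mem_compl, hSdef]
    intro hmem
    obtain ⟨a, -, ha⟩ := Finset.mem_image.mp hmem
    have h1 := π.injective ha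
    have h2 : (a:ℕ) = p + b := congrArg Fin.val h1
    have := a.isLt; omega
  set σ0 : Fin p → Fin p := fun a => (S.orderIsoOfFin hS).symm ⟨f0 a, hmem1 a⟩ with hσ0def
  have hσ0 : Function.Injective σ0 := by
    intro a b hab
    have h1 := congrArg (S.orderIsoOfFin hS) hab
    rw [OrderIso.apply_symm_apply, OrderIso.apply_symm_apply] at h1
    exact hinj (Subtype.ext_iff.mp h1)
  set τ0 : Fin q → Fin q := fun b =>
    (Sᶜ.orderIsoOfFin (compl_card p q hS)).symm ⟨_, hmem2 b⟩ with hτ0def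
  have hτ0 : Function.Injective τ0 := by
    intro a b hab
    have h1 := congrArg (Sᶜ.orderIsoOfFin (compl_card p q hS)) hab
    rw [OrderIso.apply_symm_apply, OrderIso.apply_symm_apply] at h1
    have h2 := π.injective (Subtype.ext_iff.mp h1)
    have h3 : p + (a:ℕ) = p + b := congrArg Fin.val h2
    exact Fin.ext (by omega)
  set σ : Equiv.Perm (Fin p) := Equiv.ofBijective σ0 (Finite.injective_iff_bijective.mp hσ0)
    with hσdef
  set τ : Equiv.Perm (Fin q) := Equiv.ofBijective τ0 (Finite.injective_iff_bijective.mp hτ0)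
    with hτdef
  have hσlt : ∀ a b : Fin p, (σ a < σ b ↔ f0 a < f0 b) := by
    intro a b
    show σ0 a < σ0 b ↔ _
    rw [hσ0def]
    simp only [OrderIso.lt_iff_lt]
    exact Subtype.mk_lt_mk
  have hτlt : ∀ a b : Fin q, (τ a < τ b ↔
      π ⟨p + (a:ℕ), by have := a.isLt; omega⟩ < π ⟨p + (b:ℕ), by have := b.isLt; omega⟩) := by
    intro a b
    show τ0 a < τ0 b ↔ _
    rw [hτ0def]
    simp only [OrderIso.lt_iff_lt]
    exact Subtype.mk_lt_mk
  have hσ : ∀ i, (h : i+1 < p) → (σ ⟨i+1, h⟩ < σ ⟨i, by omega⟩ ↔ c1 i = true) := by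
    intro i h
    rw [hσlt]
    exact hπ1 i h
  have hτ : ∀ j, (h : j+1 < q) → (τ ⟨j+1, h⟩ < τ ⟨j, by omega⟩ ↔ c2 j = true) := by
    intro j h
    rw [hτlt]
    exact hπ2 j h
  refine ⟨⟨⟨S, hS⟩, ⟨σ, hσ⟩, ⟨τ, hτ⟩⟩, ?_⟩
  apply Subtype.ext
  apply Equiv.ext
  intro x
  show sFun p q S hS σ τ x = π x
  by_cases hx : (x:ℕ) < p
  · simp only [sFun, dif_pos hx]
    show ((S.orderIsoOfFin hS (σ0 ⟨(x:ℕ), hx⟩) : S) : Fin (p+q)) = π x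
    rw [hσ0def]
    simp only [OrderIso.apply_symm_apply]
    show f0 ⟨(x:ℕ), hx⟩ = π x
    rw [hf0]
    exact congrArg π (Fin.ext rfl)
  · simp only [sFun, dif_neg hx]
    show ((Sᶜ.orderIsoOfFin (compl_card p q hS)
      (τ0 ⟨(x:ℕ) - p, by have := x.isLt; omega⟩) : (Sᶜ : Finset (Fin (p+q)))) : Fin (p+q)) = π x
    rw [hτ0def]
    simp only [OrderIso.apply_symm_apply]
    exact congrArg π (Fin.ext (by simp; omega))

lemma splitCard (m p q : ℕ) (hm : m = p + q) (c1 c2 : ℕ → Bool) :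
    Nat.card {π : Equiv.Perm (Fin m) //
      (∀ i, (h : i + 1 < p) → (π ⟨i+1, by omega⟩ < π ⟨i, by omega⟩ ↔ c1 i = true)) ∧
      (∀ j, (h : j + 1 < q) → (π ⟨p+j+1, by omega⟩ < π ⟨p+j, by omega⟩ ↔ c2 j = true))} =
    m.choose p *
      Nat.card {σ : Equiv.Perm (Fin p) // ∀ i, (h : i + 1 < p) →
        (σ ⟨i+1, h⟩ < σ ⟨i, by omega⟩ ↔ c1 i = true)} *
      Nat.card {τ : Equiv.Perm (Fin q) // ∀ j, (h : j + 1 < q) →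
        (τ ⟨j+1, h⟩ < τ ⟨j, by omega⟩ ↔ c2 j = true)} := by
  subst hm
  rw [← Nat.card_eq_of_bijective (Phi p q c1 c2) ⟨Phi_injective p q c1 c2, Phi_surjective p q c1 c2⟩]
  rw [Nat.card_prod, Nat.card_prod, ← mul_assoc]
  congr 1
  congr 1
  rw [Nat.card_eq_fintype_card, Fintype.card_finset_len, Fintype.card_fin]

/-- `zigzag k` is the `k`-th Euler (zigzag) number: the number of alternating permutations
`σ` of `{1,…,k}` (modeled as `Fin k`, zero-based) with `σ(1) < σ(2) > σ(3) < σ(4) > ⋯`. -/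
noncomputable def zigzag (k : ℕ) : ℕ :=
  Nat.card {σ : Equiv.Perm (Fin k) //
    ∀ i : ℕ, ∀ h : i + 1 < k,
      if i % 2 = 0 then σ ⟨i, Nat.lt_of_succ_lt h⟩ < σ ⟨i + 1, h⟩
      else σ ⟨i + 1, h⟩ < σ ⟨i, Nat.lt_of_succ_lt h⟩}

lemma dCountL_eq (w : List Bool) (L : ℕ) (hw : w.length = L) :
    dCountL w = Nat.card {π : Equiv.Perm (Fin (L+1)) //
      ∀ i, (h : i + 1 < L + 1) → (π ⟨i+1, h⟩ < π ⟨i, by omega⟩ ↔ w.getD i false = true)} := by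
  subst hw
  apply Nat.card_congr
  apply Equiv.subtypeEquivRight
  intro π
  constructor
  · intro H i h
    have := H ⟨i, by omega⟩
    simpa [Fin.succ, Fin.castSucc, Fin.castAdd, Fin.castLE, List.get_eq_getElem,
      List.getD_eq_getElem _ _ (show i < w.length by omega),
      List.getElem?_eq_getElem (show i < w.length by omega), Option.getD_some] using this
  · intro H i
    have := H i.1 (by omega)
    simpa [Fin.succ, Fin.castSucc, Fin.castAdd, Fin.castLE, List.get_eq_getElem,
      List.getD_eq_getElem _ _ i.2, List.getElem?_eq_getElem i.2, Option.getD_some] using this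

lemma zigzag_eq (k : ℕ) :
    zigzag k = Nat.card {τ : Equiv.Perm (Fin k) // ∀ j, (h : j + 1 < k) →
      (τ ⟨j+1, h⟩ < τ ⟨j, by omega⟩ ↔ (decide ((j+1) % 2 = 0)) = true)} := by
  apply Nat.card_congr
  apply Equiv.subtypeEquivRight
  intro σ
  have hne : ∀ (j : ℕ) (h : j + 1 < k), σ ⟨j, by omega⟩ ≠ σ ⟨j+1, h⟩ := by
    intro j h he
    have := σ.injective he
    simp only [Fin.mk.injEq] at this
    omega
  constructor
  · intro H j h
    have hj := H j h
    by_cases hp : j % 2 = 0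
    · rw [if_pos hp] at hj
      have h2 : ¬ ((j+1) % 2 = 0) := by omega
      simp only [h2, decide_eq_true_eq, iff_false]
      · exact fun hc => absurd hj (lt_asymm hc)
    · rw [if_neg hp] at hj
      have h2 : (j+1) % 2 = 0 := by omega
      simp only [h2, decide_eq_true_eq]
      simpa using hj
  · intro H j h
    have hj := H j h
    by_cases hp : j % 2 = 0
    · rw [if_pos hp]
      have h2 : ¬ ((j+1) % 2 = 0) := by omega
      simp only [h2, decide_eq_true_eq, iff_false] at hj
      · exact lt_of_le_of_ne (not_lt.mp (by simpa using hj)) (hne j h)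
    · rw [if_neg hp]
      have h2 : (j+1) % 2 = 0 := by omega
      simp only [h2, decide_eq_true_eq] at hj
      simpa using hj

def PCp (ℓ k : ℕ) (u : List Bool) (π : Equiv.Perm (Fin (ℓ+k+1))) : Prop :=
  (∀ i, (h : i + 1 < ℓ+1) →
    (π ⟨i+1, by omega⟩ < π ⟨i, by omega⟩ ↔ u.getD i false = true)) ∧
  (∀ j, (h : j + 1 < k) →
    (π ⟨ℓ+1+j+1, by omega⟩ < π ⟨ℓ+1+j, by omega⟩ ↔ decide ((j+1) % 2 = 0) = true))

def Qdp (ℓ k : ℕ) (hk : 1 ≤ k) (π : Equiv.Perm (Fin (ℓ+k+1))) : Prop :=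
  π ⟨ℓ+1, by omega⟩ < π ⟨ℓ, by omega⟩

def Pfullp (L : ℕ) (w : List Bool) (π : Equiv.Perm (Fin (L+1))) : Prop :=
  ∀ i, (h : i + 1 < L + 1) →
    (π ⟨i+1, h⟩ < π ⟨i, by omega⟩ ↔ w.getD i false = true)

section Core
variable (ℓ k : ℕ) (hℓ : 1 ≤ ℓ) (hk : 1 ≤ k) (u v : List Bool)

lemma main_iff (hgl : ∀ i, i < ℓ → (u ++ v).getD i false = u.getD i false)
    (hgr : ∀ j, j < k → (u ++ v).getD (ℓ + j) false = decide (j % 2 = 0))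
    (π : Equiv.Perm (Fin (ℓ+k+1))) :
    Pfullp (ℓ+k) (u++v) π ↔ (PCp ℓ k u π ∧ Qdp ℓ k hk π) := by
  unfold Pfullp PCp Qdp
  constructor
  · intro H
    refine ⟨⟨?_, ?_⟩, ?_⟩
    · intro i h
      have h2 := H i (by omega)
      rwa [hgl i (by omega)] at h2
    · intro j h
      have h2 := H (ℓ+1+j) (by omega)
      have e : (u ++ v).getD (ℓ+1+j) false = decide ((j+1) % 2 = 0) := by
        have h3 := hgr (j+1) (by omega)
        rwa [show ℓ + (j+1) = ℓ+1+j from by omega] at h3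
      rwa [e] at h2
    · have h2 := H ℓ (by omega)
      have e : (u ++ v).getD ℓ false = true := by simpa using hgr 0 (by omega)
      rw [e] at h2
      exact h2.mpr rfl
  · rintro ⟨⟨H1, H2⟩, HQ⟩ i h
    rcases (show i < ℓ ∨ i = ℓ ∨ (ℓ + 1 ≤ i) from by omega) with h1 | h1 | h1
    · rw [hgl i h1]
      exact H1 i (by omega)
    · subst h1
      have e : (u ++ v).getD i false = true := by simpa using hgr 0 (by omega)
      rw [e]
      exact iff_of_true HQ rfl
    · have h2 := H2 (i - (ℓ+1)) (by omega)
      have e1 : (⟨ℓ+1+(i-(ℓ+1))+1, by omega⟩ : Fin (ℓ+k+1)) = ⟨i+1, h⟩ := by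
        simp only [Fin.mk.injEq]; omega
      have e2 : (⟨ℓ+1+(i-(ℓ+1)), by omega⟩ : Fin (ℓ+k+1)) = ⟨i, by omega⟩ := by
        simp only [Fin.mk.injEq]; omega
      rw [e1, e2] at h2
      have e3 : (u ++ v).getD i false = decide ((i - (ℓ+1) + 1) % 2 = 0) := by
        have h3 := hgr (i - ℓ) (by omega)
        rw [show ℓ + (i - ℓ) = i from by omega] at h3
        rw [h3]
        congr 2
        omega
      rw [e3]
      exact h2

set_option maxHeartbeats 1600000 in
lemma hmap_lemma (hlast : u.getD (ℓ-1) false = false)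
    (hgl : ∀ i, i < ℓ → (u ++ v).getD i false = u.getD i false)
    (hgr : ∀ j, j < k → (u ++ v).getD (ℓ + j) false = decide (j % 2 = 0))
    (π : Equiv.Perm (Fin (ℓ+k+1))) (hπ : PCp ℓ k u π) (hq : ¬ Qdp ℓ k hk π) :
    Pfullp (ℓ+k) (u++v)
      (π * Equiv.swap (⟨ℓ, by omega⟩ : Fin (ℓ+k+1)) ⟨ℓ+1, by omega⟩) := by
  obtain ⟨H1, H2⟩ := hπ
  unfold Qdp at hq
  have hne2 : π ⟨ℓ, by omega⟩ ≠ π ⟨ℓ+1, by omega⟩ := by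
    intro he; have := π.injective he; simp only [Fin.mk.injEq] at this; omega
  have hasc : π ⟨ℓ, by omega⟩ < π ⟨ℓ+1, by omega⟩ :=
    lt_of_le_of_ne (not_lt.mp hq) hne2
  intro i h
  rcases (show i + 1 < ℓ ∨ i + 1 = ℓ ∨ i = ℓ ∨ i = ℓ + 1 ∨ ℓ + 2 ≤ i from by omega)
    with h1|h1|h1|h1|h1
  · have e1 : Equiv.swap (⟨ℓ, by omega⟩ : Fin (ℓ+k+1)) ⟨ℓ+1, by omega⟩ ⟨i+1, h⟩ = ⟨i+1, h⟩ :=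
      Equiv.swap_apply_of_ne_of_ne (fin_mk_ne _ _ (by omega)) (fin_mk_ne _ _ (by omega))
    have e2 : Equiv.swap (⟨ℓ, by omega⟩ : Fin (ℓ+k+1)) ⟨ℓ+1, by omega⟩ ⟨i, by omega⟩
        = ⟨i, by omega⟩ :=
      Equiv.swap_apply_of_ne_of_ne (fin_mk_ne _ _ (by omega)) (fin_mk_ne _ _ (by omega))
    rw [Equiv.Perm.mul_apply, Equiv.Perm.mul_apply, e1, e2, hgl i (by omega)]
    exact H1 i (by omega)
  · have e1 : Equiv.swap (⟨ℓ, by omega⟩ : Fin (ℓ+k+1)) ⟨ℓ+1, by omega⟩ ⟨i+1, h⟩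
        = ⟨ℓ+1, by omega⟩ := by
      rw [show (⟨i+1, h⟩ : Fin (ℓ+k+1)) = ⟨ℓ, by omega⟩ from by simp only [Fin.mk.injEq]; omega]
      exact Equiv.swap_apply_left _ _
    have e2 : Equiv.swap (⟨ℓ, by omega⟩ : Fin (ℓ+k+1)) ⟨ℓ+1, by omega⟩ ⟨i, by omega⟩
        = ⟨i, by omega⟩ :=
      Equiv.swap_apply_of_ne_of_ne (fin_mk_ne _ _ (by omega)) (fin_mk_ne _ _ (by omega))
    rw [Equiv.Perm.mul_apply, Equiv.Perm.mul_apply, e1, e2, hgl i (by omega)]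
    have hlast' : u.getD i false = false := by
      rw [show i = ℓ - 1 from by omega]; exact hlast
    rw [hlast']
    simp only [Bool.false_eq_true, iff_false]
    have h4 : ¬ (π ⟨i+1, by omega⟩ < π ⟨i, by omega⟩) := by
      rw [H1 i (by omega), hlast']; simp
    have hne3 : π ⟨i+1, by omega⟩ ≠ π ⟨i, by omega⟩ := by
      intro he; have := π.injective he; simp only [Fin.mk.injEq] at this; omega
    have h5 : π ⟨i, by omega⟩ < π ⟨i+1, by omega⟩ :=
      lt_of_le_of_ne (not_lt.mp h4) (Ne.symm hne3)
    have e4 : π ⟨i+1, by omega⟩ = π ⟨ℓ, by omega⟩ :=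
      congrArg π (by simp only [Fin.mk.injEq]; omega)
    have h6 : π ⟨i, by omega⟩ < π ⟨ℓ+1, by omega⟩ := lt_trans (lt_of_lt_of_eq h5 e4) hasc
    exact fun hc => lt_asymm hc h6
  · subst h1
    have e1 : Equiv.swap (⟨i, by omega⟩ : Fin (i+k+1)) ⟨i+1, by omega⟩ ⟨i+1, h⟩
        = ⟨i, by omega⟩ := Equiv.swap_apply_right _ _
    have e2 : Equiv.swap (⟨i, by omega⟩ : Fin (i+k+1)) ⟨i+1, by omega⟩ ⟨i, by omega⟩
        = ⟨i+1, by omega⟩ := Equiv.swap_apply_left _ _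
    rw [Equiv.Perm.mul_apply, Equiv.Perm.mul_apply, e1, e2]
    have e3 : (u ++ v).getD i false = true := by simpa using hgr 0 (by omega)
    rw [e3]
    exact iff_of_true hasc rfl
  · subst h1
    have hk2 : 2 ≤ k := by omega
    have e1 : Equiv.swap (⟨ℓ, by omega⟩ : Fin (ℓ+k+1)) ⟨ℓ+1, by omega⟩ ⟨ℓ+1+1, h⟩
        = ⟨ℓ+1+1, h⟩ :=
      Equiv.swap_apply_of_ne_of_ne (fin_mk_ne _ _ (by omega)) (fin_mk_ne _ _ (by omega))
    have e2 : Equiv.swap (⟨ℓ, by omega⟩ : Fin (ℓ+k+1)) ⟨ℓ+1, by omega⟩ ⟨ℓ+1, by omega⟩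
        = ⟨ℓ, by omega⟩ := Equiv.swap_apply_right _ _
    rw [Equiv.Perm.mul_apply, Equiv.Perm.mul_apply, e1, e2]
    have e3 : (u ++ v).getD (ℓ+1) false = false := by
      have h3 := hgr 1 (by omega)
      rw [h3]
      simp
    rw [e3]
    simp only [Bool.false_eq_true, iff_false]
    have h2 := H2 0 (by omega)
    have f1 : (⟨ℓ+1+0+1, by omega⟩ : Fin (ℓ+k+1)) = ⟨ℓ+1+1, h⟩ := by
      simp only [Fin.mk.injEq]
    have f2 : (⟨ℓ+1+0, by omega⟩ : Fin (ℓ+k+1)) = ⟨ℓ+1, by omega⟩ := by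
      simp only [Fin.mk.injEq]
    have h2' := ((lt_congr (congrArg π f1) (congrArg π f2)).symm.trans h2)
    simp only [decide_eq_true_eq] at h2'
    have h4 : ¬ (π ⟨ℓ+1+1, h⟩ < π ⟨ℓ+1, by omega⟩) := by
      rw [h2']; omega
    have hne3 : π ⟨ℓ+1+1, h⟩ ≠ π ⟨ℓ+1, by omega⟩ := by
      intro he; have := π.injective he; simp only [Fin.mk.injEq] at this; omega
    have h5 : π ⟨ℓ+1, by omega⟩ < π ⟨ℓ+1+1, h⟩ :=
      lt_of_le_of_ne (not_lt.mp h4) (Ne.symm hne3)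
    have h6 : π ⟨ℓ, by omega⟩ < π ⟨ℓ+1+1, h⟩ := lt_trans hasc h5
    exact fun hc => lt_asymm hc h6
  · have e1 : Equiv.swap (⟨ℓ, by omega⟩ : Fin (ℓ+k+1)) ⟨ℓ+1, by omega⟩ ⟨i+1, h⟩ = ⟨i+1, h⟩ :=
      Equiv.swap_apply_of_ne_of_ne (fin_mk_ne _ _ (by omega)) (fin_mk_ne _ _ (by omega))
    have e2 : Equiv.swap (⟨ℓ, by omega⟩ : Fin (ℓ+k+1)) ⟨ℓ+1, by omega⟩ ⟨i, by omega⟩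
        = ⟨i, by omega⟩ :=
      Equiv.swap_apply_of_ne_of_ne (fin_mk_ne _ _ (by omega)) (fin_mk_ne _ _ (by omega))
    rw [Equiv.Perm.mul_apply, Equiv.Perm.mul_apply, e1, e2]
    have h2 := H2 (i - (ℓ+1)) (by omega)
    have f1 : (⟨ℓ+1+(i-(ℓ+1))+1, by omega⟩ : Fin (ℓ+k+1)) = ⟨i+1, h⟩ := by
      simp only [Fin.mk.injEq]; omega
    have f2 : (⟨ℓ+1+(i-(ℓ+1)), by omega⟩ : Fin (ℓ+k+1)) = ⟨i, by omega⟩ := by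
      simp only [Fin.mk.injEq]; omega
    have h2' := ((lt_congr (congrArg π f1) (congrArg π f2)).symm.trans h2)
    have e3 : (u ++ v).getD i false = decide ((i - (ℓ+1) + 1) % 2 = 0) := by
      have h3 := hgr (i - ℓ) (by omega)
      rw [show ℓ + (i - ℓ) = i from by omega] at h3
      rw [h3]
      congr 2
      omega
    rw [e3]
    exact h2'

end Core

lemma core (ℓ k : ℕ) (hℓ : 1 ≤ ℓ) (hk : 1 ≤ k) (u v : List Bool) (hu : u.length = ℓ) (hlast : u.getD (ℓ-1) false = false)
    (hv : v = List.ofFn (fun i : Fin k => decide ((i : ℕ) % 2 = 0))) :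
    (ℓ+k+1).choose (ℓ+1) * dCountL u * zigzag k ≤ 2 * dCountL (u ++ v) := by
  classical
  have hw : (u ++ v).length = ℓ + k := by simp [hu, hv]
  have hgl : ∀ i, i < ℓ → (u ++ v).getD i false = u.getD i false := by
    intro i hi
    rw [List.getD_eq_getElem _ _ (show i < (u++v).length by omega),
        List.getElem_append_left (show i < u.length by omega),
        ← List.getD_eq_getElem _ false (show i < u.length by omega)]
  have hgr : ∀ j, j < k → (u ++ v).getD (ℓ + j) false = decide (j % 2 = 0) := by
    intro j hj
    rw [List.getD_eq_getElem _ _ (show ℓ + j < (u++v).length by omega),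
        List.getElem_append_right (show u.length ≤ ℓ + j by omega)]
    have e : ℓ + j - u.length = j := by omega
    simp only [hv, List.getElem_ofFn, e]
  have m1 : Nat.card {π : Equiv.Perm (Fin (ℓ+k+1)) // PCp ℓ k u π ∧ Qdp ℓ k hk π} =
      Nat.card {π : Equiv.Perm (Fin (ℓ+k+1)) // Pfullp (ℓ+k) (u++v) π} :=
    Nat.card_congr (Equiv.subtypeEquivRight
      (fun π => (main_iff ℓ k hk u v hgl hgr π).symm))
  have m2 : Nat.card {π : Equiv.Perm (Fin (ℓ+k+1)) // PCp ℓ k u π ∧ ¬ Qdp ℓ k hk π} ≤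
      Nat.card {π : Equiv.Perm (Fin (ℓ+k+1)) // Pfullp (ℓ+k) (u++v) π} := by
    apply Nat.card_le_card_of_injective
      (fun t => (⟨t.1 * Equiv.swap (⟨ℓ, by omega⟩ : Fin (ℓ+k+1)) ⟨ℓ+1, by omega⟩,
        hmap_lemma ℓ k hk u v hlast hgl hgr t.1 t.2.1 t.2.2⟩ :
        {π : Equiv.Perm (Fin (ℓ+k+1)) // Pfullp (ℓ+k) (u++v) π}))
    rintro ⟨π, hπ⟩ ⟨ρ, hρ⟩ hpr
    have h1 := Subtype.ext_iff.mp hpr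
    exact Subtype.ext (mul_right_cancel h1)
  calc (ℓ+k+1).choose (ℓ+1) * dCountL u * zigzag k
      = Nat.card {π : Equiv.Perm (Fin (ℓ+k+1)) // PCp ℓ k u π} := by
        rw [dCountL_eq u ℓ hu, zigzag_eq k]
        exact (splitCard (ℓ+k+1) (ℓ+1) k (by omega)
          (fun i => u.getD i false) (fun j => decide ((j+1) % 2 = 0))).symm
    _ = Nat.card {π : Equiv.Perm (Fin (ℓ+k+1)) // PCp ℓ k u π ∧ Qdp ℓ k hk π}
        + Nat.card {π : Equiv.Perm (Fin (ℓ+k+1)) // PCp ℓ k u π ∧ ¬ Qdp ℓ k hk π} :=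
        (card_split _ _).symm
    _ ≤ 2 * Nat.card {π : Equiv.Perm (Fin (ℓ+k+1)) // Pfullp (ℓ+k) (u++v) π} := by
        rw [m1]; omega
    _ = 2 * dCountL (u ++ v) := by rw [dCountL_eq (u++v) (ℓ+k) hw]; rfl

theorem stmt7 (n k : ℕ) (hn : 2 ≤ n) (hk : 1 ≤ k) (u : List Bool)
    (hu : u.length = n - 1) (hlast : u.getLast? = some false) :
    (dCountL (u ++ List.ofFn (fun i : Fin k => decide ((i : ℕ) % 2 = 0))) : ℝ) ≥
      (1 / 2 : ℝ) * ((n + k).choose k : ℝ) * (zigzag k : ℝ) * (dCountL u : ℝ) := by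
  have hℓ : 1 ≤ u.length := by omega
  have hlast' : u.getD (u.length - 1) false = false := by
    rw [List.getLast?_eq_getElem?] at hlast
    have h1 : u.length - 1 < u.length := by omega
    rw [List.getElem?_eq_getElem h1] at hlast
    rw [List.getD_eq_getElem _ _ h1]
    exact Option.some.inj hlast
  have key := core u.length k hℓ hk u _ rfl hlast' rfl
  have hch : (u.length+k+1).choose (u.length+1) = (n+k).choose k := by
    have h3 := Nat.choose_symm (show k ≤ u.length+k+1 by omega)
    rw [show u.length+k+1-k = u.length+1 from by omega] at h3
    rw [h3, show u.length+k+1 = n+k from by omega]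
  rw [hch] at key
  rw [ge_iff_le]
  have hcast : (((n+k).choose k : ℝ)) * (dCountL u : ℝ) * (zigzag k : ℝ) ≤
      2 * (dCountL (u ++ List.ofFn (fun i : Fin k => decide ((i : ℕ) % 2 = 0))) : ℝ) := by
    exact_mod_cast key
  linarith [hcast]
end

section
/- For every infinite binary word w and every integer n ≥ 1, (1/n) · d_n(w) ≤ d_n(Σ(w)) ≤ n · d_n(w), where Σ(w) is the shift of w, i.e., the word whose i-th letter is w_{i+1}. -/
/-!
Read a permutation as the sequence of its values. Moving the last entry to the front and
relabelling it as the largest or smallest value (according to `w₁`), while keeping the relative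
order of the other entries, turns a permutation with descent word `Σ w` into one with descent
word `w`. Moving the first entry to the end and relabelling it according to `wₙ` goes the other
way. Both maps become injective once the moved value is recorded, which costs a factor `n`.
-/

open Filter

open Equiv

namespace Fin

variable {N : ℕ}

def moveTo (m t : Fin (N + 1)) : Perm (Fin (N + 1)) :=
  t.cycleRange.symm * m.cycleRange

@[simp]
lemma moveTo_apply_self (m t : Fin (N + 1)) : moveTo m t m = t := by
  simp [moveTo]

@[simp]
lemma moveTo_apply_succAbove (m t : Fin (N + 1)) (j : Fin N) :
    moveTo m t (m.succAbove j) = t.succAbove j := by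
  simp [moveTo]

lemma moveTo_lt_moveTo_iff {m t x y : Fin (N + 1)} (hx : x ≠ m) (hy : y ≠ m) :
    moveTo m t x < moveTo m t y ↔ x < y := by
  obtain ⟨i, rfl⟩ := exists_succAbove_eq hx
  obtain ⟨j, rfl⟩ := exists_succAbove_eq hy
  simp [succAbove_lt_succAbove_iff]

lemma moveTo_last_lt {m x : Fin (N + 1)} (hx : x ≠ m) : moveTo m (last N) x < last N := by
  obtain ⟨i, rfl⟩ := exists_succAbove_eq hx
  simp [castSucc_lt_last]

lemma zero_lt_moveTo_zero {m x : Fin (N + 1)} (hx : x ≠ m) : 0 < moveTo m 0 x := by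
  obtain ⟨i, rfl⟩ := exists_succAbove_eq hx
  simp [succ_pos]

end Fin

lemma finRotate_symm_of_lt {N i : ℕ} (h : i < N) :
    (finRotate (N + 1)).symm ⟨i + 1, Nat.succ_lt_succ h⟩ = ⟨i, by omega⟩ :=
  (Equiv.symm_apply_eq _).2 (finRotate_of_lt h).symm

def HasDescentWord {n : ℕ} (w : ℕ → Bool) (π : Perm (Fin n)) : Prop :=
  ∀ i : ℕ, ∀ h : i + 1 < n, (π ⟨i + 1, h⟩ < π ⟨i, Nat.lt_of_succ_lt h⟩ ↔ w (i + 1) = true)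

section DescentWord

open Fin

variable {N : ℕ}

lemma card_le_mul_card_of_moveTo {P Q : Perm (Fin (N + 1)) → Prop} (p t : Fin (N + 1))
    (ρ : Perm (Fin (N + 1))) (hPQ : ∀ π, P π → Q (moveTo (π p) t * π * ρ)) :
    Nat.card {π // P π} ≤ (N + 1) * Nat.card {σ // Q σ} := by
  let f : {π // P π} → {σ // Q σ} × Fin (N + 1) := fun π => (⟨_, hPQ π π.2⟩, π.1 p)
  have hf : f.Injective := by
    rintro ⟨π, _⟩ ⟨π', _⟩ hππ'
    simp only [f, Prod.mk.injEq, Subtype.mk.injEq] at hππ'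
    obtain ⟨h, hp⟩ := hππ'
    rw [hp] at h
    exact Subtype.ext (mul_left_cancel (mul_right_cancel h))
  calc Nat.card {π // P π} ≤ Nat.card ({σ // Q σ} × Fin (N + 1)) :=
        Nat.card_le_card_of_injective f hf
    _ = (N + 1) * Nat.card {σ // Q σ} := by simp [Nat.card_prod, mul_comm]

lemma HasDescentWord.rotate_right {w : ℕ → Bool} {π : Perm (Fin (N + 1))}
    (hπ : HasDescentWord (fun i => w (i + 1)) π) :
    HasDescentWord w
      (moveTo (π (last N)) (if w 1 then last N else 0) * π * (finRotate (N + 1)).symm) := by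
  have hne : ∀ i (h : i < N), π ⟨i, by omega⟩ ≠ π (last N) := fun i h =>
    π.injective.ne (by simp [Fin.ext_iff]; omega)
  have hlast : (finRotate (N + 1)).symm ⟨0, N.succ_pos⟩ = last N :=
    (Equiv.symm_apply_eq _).2 finRotate_last.symm
  rintro (_ | i) h <;>
    simp only [Perm.mul_apply, finRotate_symm_of_lt (Nat.lt_of_succ_lt_succ h)]
  · have hx := hne 0 (by omega)
    rw [hlast, moveTo_apply_self]
    cases w 1
    · exact iff_of_false (zero_lt_moveTo_zero hx).not_gt Bool.false_ne_true
    · exact iff_of_true (moveTo_last_lt hx) rfl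
  · rw [finRotate_symm_of_lt (by omega : i < N),
      moveTo_lt_moveTo_iff (hne _ (by omega)) (hne _ (by omega))]
    exact hπ i (by omega)

lemma HasDescentWord.rotate_left {w : ℕ → Bool} {σ : Perm (Fin (N + 1))}
    (hσ : HasDescentWord w σ) :
    HasDescentWord (fun i => w (i + 1))
      (moveTo (σ 0) (if w (N + 1) then 0 else last N) * σ * finRotate (N + 1)) := by
  have hne : ∀ i (h : i + 1 < N + 1), σ ⟨i + 1, h⟩ ≠ σ 0 := fun i h =>
    σ.injective.ne (by simp [Fin.ext_iff])
  intro i h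
  simp only [Perm.mul_apply]
  rw [finRotate_of_lt (by omega : i < N)]
  obtain hi | rfl : i + 1 < N ∨ i + 1 = N := by omega
  · rw [finRotate_of_lt hi, moveTo_lt_moveTo_iff (hne _ (by omega)) (hne _ (by omega))]
    exact hσ (i + 1) (by omega)
  · have hx := hne i h
    rw [show (⟨i + 1, h⟩ : Fin (i + 1 + 1)) = last (i + 1) from rfl, finRotate_last,
      moveTo_apply_self]
    cases w (i + 1 + 1)
    · exact iff_of_false (moveTo_last_lt hx).not_gt Bool.false_ne_true
    · exact iff_of_true (zero_lt_moveTo_zero hx) rfl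

end DescentWord

theorem dCount_shift_le_mul_dCount (w : ℕ → Bool) (N : ℕ) :
    dCount (fun i => w (i + 1)) (N + 1) ≤ (N + 1) * dCount w (N + 1) :=
  card_le_mul_card_of_moveTo _ _ _ fun _ => HasDescentWord.rotate_right

theorem dCount_le_mul_dCount_shift (w : ℕ → Bool) (N : ℕ) :
    dCount w (N + 1) ≤ (N + 1) * dCount (fun i => w (i + 1)) (N + 1) :=
  card_le_mul_card_of_moveTo _ _ _ fun _ => HasDescentWord.rotate_left

theorem stmt8 (w : ℕ → Bool) (n : ℕ) (hn : 1 ≤ n) :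
    (1 / (n : ℝ)) * (dCount w n : ℝ) ≤ (dCount (fun i => w (i + 1)) n : ℝ) ∧
      (dCount (fun i => w (i + 1)) n : ℝ) ≤ (n : ℝ) * (dCount w n : ℝ) := by
  obtain ⟨N, rfl⟩ : ∃ N, n = N + 1 := ⟨n - 1, by omega⟩
  have hpos : (0 : ℝ) < (N + 1 : ℕ) := by positivity
  constructor
  · rw [one_div, inv_mul_le_iff₀ hpos]
    exact_mod_cast dCount_le_mul_dCount_shift w N
  · exact_mod_cast dCount_shift_le_mul_dCount w N
end

section
/- Let w be an infinite binary word, M > 0 a real number, and n ≥ 2, k ≥ 1 integers such that w_{n−1} = 0, and for all 1 ≤ i ≤ k, w_{n+i−1} = 1 if i is odd and w_{n+i−1} = 0 if i is even. Suppose (1/2) · (E_k / k!) · M^k ≥ 1, where E_k is the number of alternating permutations of {1,…,k}. Then d_{n+k}(w) · M^{n+k} / (n+k)! ≥ d_n(w) · M^n / n!. -/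
open Filter

/-!
Let `v` be `w` shifted by `n`; by the hypothesis on `w`, a permutation has descent word `v` on
`{1,…,k}` iff it is alternating. Splicing a permutation of `{1,…,n}` with descent word `w`, an
alternating permutation of `{1,…,k}`, and a choice of the `n` values taken by the first block
injectively produces `d_n(w) E_k C(n+k,n)` permutations of `{1,…,n+k}` that follow `w` except
possibly at the junction `n`. Each of them either has its descent at `n` already, or acquires it
when positions `n` and `n+1` are swapped: because `w_{n-1} = 0` and (for `k ≥ 2`) `w_{n+1} = 0`,
the neighbouring ascents survive the swap. Hence `d_n(w) E_k C(n+k,n) ≤ 2 d_{n+k}(w)`, and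
`(n+k)! = C(n+k,n) n! k!` together with `E_k M^k ≥ 2 k!` gives the claim.
-/

open Equiv

namespace DescentWord

def HasDescentWord (w : ℕ → Bool) {N : ℕ} (τ : Perm (Fin N)) : Prop :=
  ∀ i : ℕ, ∀ h : i + 1 < N, (τ ⟨i + 1, h⟩ < τ ⟨i, Nat.lt_of_succ_lt h⟩ ↔ w (i + 1) = true)

def HasDescentWordExcept (w : ℕ → Bool) (p : ℕ) {N : ℕ} (τ : Perm (Fin N)) : Prop :=
  ∀ i : ℕ, ∀ h : i + 1 < N, i ≠ p →
    (τ ⟨i + 1, h⟩ < τ ⟨i, Nat.lt_of_succ_lt h⟩ ↔ w (i + 1) = true)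

theorem dCount_eq_card (w : ℕ → Bool) (N : ℕ) :
    dCount w N = Nat.card {τ : Perm (Fin N) // HasDescentWord w τ} :=
  rfl

theorem zigzag_eq_dCount {v : ℕ → Bool} {k : ℕ}
    (hv : ∀ j, 1 ≤ j → j < k → (v j = true ↔ j % 2 = 0)) :
    zigzag k = dCount v k := by
  refine Nat.card_congr (subtypeEquivRight fun σ => forall₂_congr fun i h => ?_)
  have hne : σ ⟨i, Nat.lt_of_succ_lt h⟩ ≠ σ ⟨i + 1, h⟩ :=
    σ.injective.ne (by simp [Fin.ext_iff])
  rw [hv (i + 1) (by omega) h]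
  split_ifs with hi
  · simp only [(show (i + 1) % 2 ≠ 0 by omega), iff_false, not_lt]
    exact ⟨le_of_lt, fun hle => lt_of_le_of_ne hle hne⟩
  · simp [(show (i + 1) % 2 = 0 by omega)]

section Merge

variable {n k : ℕ}

theorem card_compl_eq (T : {T : Finset (Fin (n + k)) // T.card = n}) : T.1ᶜ.card = k := by
  simp [Finset.card_compl, T.2]

noncomputable def merge (T : {T : Finset (Fin (n + k)) // T.card = n}) (π : Perm (Fin n))
    (σ : Perm (Fin k)) : Perm (Fin (n + k)) :=
  finSumFinEquiv.symm.trans <| (π.sumCongr σ).trans <|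
    finSumEquivOfFinset T.2 (card_compl_eq T)

variable (T : {T : Finset (Fin (n + k)) // T.card = n}) (π : Perm (Fin n)) (σ : Perm (Fin k))

@[simp]
theorem merge_castAdd (i : Fin n) :
    merge T π σ (Fin.castAdd k i) = T.1.orderEmbOfFin T.2 (π i) := by
  simp [merge]

@[simp]
theorem merge_natAdd (m : Fin k) :
    merge T π σ (Fin.natAdd n m) =
      T.1ᶜ.orderEmbOfFin (card_compl_eq T) (σ m) := by
  simp [merge]

theorem range_merge_castAdd :
    Set.range (fun i => merge T π σ (Fin.castAdd k i)) = T.1 := by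
  simp only [merge_castAdd]
  exact (π.surjective.range_comp (T.1.orderEmbOfFin T.2)).trans (T.1.range_orderEmbOfFin T.2)

theorem eq_and_eq_and_eq_of_merge_eq {T' : {T : Finset (Fin (n + k)) // T.card = n}}
    {π' : Perm (Fin n)} {σ' : Perm (Fin k)} (h : merge T π σ = merge T' π' σ') :
    T = T' ∧ π = π' ∧ σ = σ' := by
  obtain rfl : T = T' := Subtype.ext <| Finset.coe_injective <| by
    rw [← range_merge_castAdd T π σ, ← range_merge_castAdd T' π' σ', h]
  refine ⟨rfl, Equiv.ext fun i => (T.1.orderEmbOfFin T.2).injective ?_,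
    Equiv.ext fun m => (T.1ᶜ.orderEmbOfFin (card_compl_eq T)).injective ?_⟩
  · simpa using DFunLike.congr_fun h (Fin.castAdd k i)
  · simpa using DFunLike.congr_fun h (Fin.natAdd n m)

theorem hasDescentWordExcept_merge {w : ℕ → Bool} (hπ : HasDescentWord w π)
    (hσ : HasDescentWord (fun j => w (n + j)) σ) :
    HasDescentWordExcept w (n - 1) (merge T π σ) := by
  intro i h hi
  by_cases hin : i + 1 < n
  · have := hπ i hin
    rwa [← (T.1.orderEmbOfFin T.2).lt_iff_lt, ← merge_castAdd, ← merge_castAdd] at this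
  · obtain ⟨m, rfl⟩ : ∃ m, i = n + m := ⟨i - n, by omega⟩
    have := hσ m (by omega)
    rwa [← (T.1ᶜ.orderEmbOfFin (card_compl_eq T)).lt_iff_lt, ← merge_natAdd, ← merge_natAdd]
      at this

end Merge

theorem dCount_mul_dCount_mul_choose_le (w : ℕ → Bool) (n k : ℕ) :
    dCount w n * dCount (fun j => w (n + j)) k * (n + k).choose n ≤
      Nat.card {τ : Perm (Fin (n + k)) // HasDescentWordExcept w (n - 1) τ} := by
  let F : {T : Finset (Fin (n + k)) // T.card = n} × {π : Perm (Fin n) // HasDescentWord w π} ×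
      {σ : Perm (Fin k) // HasDescentWord (fun j => w (n + j)) σ} →
      {τ : Perm (Fin (n + k)) // HasDescentWordExcept w (n - 1) τ} :=
    fun x => ⟨merge x.1 x.2.1 x.2.2, hasDescentWordExcept_merge _ _ _ x.2.1.2 x.2.2.2⟩
  have hF : Function.Injective F := by
    rintro ⟨T, ⟨π, _⟩, ⟨σ, _⟩⟩ ⟨T', ⟨π', _⟩, ⟨σ', _⟩⟩ h
    obtain ⟨rfl, rfl, rfl⟩ := eq_and_eq_and_eq_of_merge_eq T π σ (congrArg Subtype.val h)
    rfl
  calc dCount w n * dCount (fun j => w (n + j)) k * (n + k).choose n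
      = Nat.card ({T : Finset (Fin (n + k)) // T.card = n} ×
          {π : Perm (Fin n) // HasDescentWord w π} ×
          {σ : Perm (Fin k) // HasDescentWord (fun j => w (n + j)) σ}) := by
        rw [Nat.card_prod, Nat.card_prod, Nat.card_eq_fintype_card (α := {T // _}),
          Fintype.card_finset_len, Fintype.card_fin, dCount_eq_card, dCount_eq_card]
        ring
    _ ≤ _ := Nat.card_le_card_of_injective F hF

section Swap

variable {w : ℕ → Bool} {N p : ℕ} {τ : Perm (Fin N)}

theorem hasDescentWord_mul_swap (hpN : p + 1 < N) (hτ : HasDescentWordExcept w p τ)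
    (hprev : w p = false) (hcur : w (p + 1) = true) (hnext : p + 2 < N → w (p + 2) = false)
    (hasc : τ ⟨p, Nat.lt_of_succ_lt hpN⟩ < τ ⟨p + 1, hpN⟩) :
    HasDescentWord w (τ * swap ⟨p, Nat.lt_of_succ_lt hpN⟩ ⟨p + 1, hpN⟩) := by
  intro i h
  have hfix : ∀ j (hj : j < N), j ≠ p → j ≠ p + 1 →
      swap (⟨p, Nat.lt_of_succ_lt hpN⟩ : Fin N) ⟨p + 1, hpN⟩ ⟨j, hj⟩ = ⟨j, hj⟩ :=
    fun j hj h1 h2 => swap_apply_of_ne_of_ne (by simpa [Fin.ext_iff]) (by simpa [Fin.ext_iff])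
  simp only [Perm.mul_apply]
  obtain hi | rfl | rfl | rfl : (i + 1 < p ∨ p + 1 < i) ∨ i + 1 = p ∨ i = p ∨ i = p + 1 := by
    omega
  · rw [hfix (i + 1) h (by omega) (by omega), hfix i _ (by omega) (by omega)]
    exact hτ i h (by omega)
  · rw [swap_apply_left, hfix i _ (by omega) (by omega), hprev]
    have := hτ i (by omega) (by omega)
    simp only [hprev, Bool.false_eq_true, iff_false, not_lt] at this ⊢
    exact this.trans hasc.le
  · rw [swap_apply_left, swap_apply_right]
    exact iff_of_true hasc hcur
  · rw [swap_apply_right, hfix (p + 2) h (by omega) (by omega), hnext h]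
    have := hτ (p + 1) h (by omega)
    simp only [hnext h, Bool.false_eq_true, iff_false, not_lt] at this ⊢
    exact hasc.le.trans this

theorem hasDescentWord_or_hasDescentWord_mul_swap (hpN : p + 1 < N)
    (hτ : HasDescentWordExcept w p τ) (hprev : w p = false) (hcur : w (p + 1) = true)
    (hnext : p + 2 < N → w (p + 2) = false) :
    HasDescentWord w τ ∨
      HasDescentWord w (τ * swap ⟨p, Nat.lt_of_succ_lt hpN⟩ ⟨p + 1, hpN⟩) := by
  by_cases hdesc : τ ⟨p + 1, hpN⟩ < τ ⟨p, Nat.lt_of_succ_lt hpN⟩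
  · refine .inl fun i h => ?_
    obtain rfl | hi := eq_or_ne i p
    · exact iff_of_true hdesc hcur
    · exact hτ i h hi
  · refine .inr (hasDescentWord_mul_swap hpN hτ hprev hcur hnext ?_)
    exact lt_of_le_of_ne (not_lt.1 hdesc) (τ.injective.ne (by simp [Fin.ext_iff]))

theorem card_hasDescentWordExcept_le (hpN : p + 1 < N) (hprev : w p = false)
    (hcur : w (p + 1) = true) (hnext : p + 2 < N → w (p + 2) = false) :
    Nat.card {τ : Perm (Fin N) // HasDescentWordExcept w p τ} ≤
      2 * Nat.card {τ : Perm (Fin N) // HasDescentWord w τ} := by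
  classical
  set s := swap (⟨p, Nat.lt_of_succ_lt hpN⟩ : Fin N) ⟨p + 1, hpN⟩
  set good := Finset.univ.filter fun τ : Perm (Fin N) => HasDescentWord w τ
  have hsub : Finset.univ.filter (fun τ : Perm (Fin N) => HasDescentWordExcept w p τ) ⊆
      good ∪ good.image (· * s) := fun τ hτ => by
    simp only [Finset.mem_filter, Finset.mem_univ, true_and] at hτ
    rcases hasDescentWord_or_hasDescentWord_mul_swap hpN hτ hprev hcur hnext with h | h
    · exact Finset.mem_union_left _ (by simpa [good] using h)
    · refine Finset.mem_union_right _ (Finset.mem_image.2 ⟨τ * s, by simpa [good] using h, ?_⟩)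
      simp [s, mul_assoc]
  simp only [Nat.card_eq_fintype_card, Fintype.card_subtype]
  calc _ ≤ (good ∪ good.image (· * s)).card := Finset.card_le_card hsub
    _ ≤ good.card + (good.image (· * s)).card := Finset.card_union_le _ _
    _ ≤ 2 * good.card := by linarith [Finset.card_image_le (s := good) (f := (· * s))]

end Swap

end DescentWord

theorem stmt12 (w : ℕ → Bool) (M : ℝ) (hM : 0 < M) (n k : ℕ) (hn : 2 ≤ n) (hk : 1 ≤ k)
    (hlast : w (n - 1) = false)
    (hw : ∀ i : ℕ, 1 ≤ i → i ≤ k → (w (n + i - 1) = true ↔ i % 2 = 1))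
    (hE : (1 / 2 : ℝ) * ((zigzag k : ℝ) / (Nat.factorial k : ℝ)) * M ^ k ≥ 1) :
    (dCount w (n + k) : ℝ) * M ^ (n + k) / (Nat.factorial (n + k) : ℝ) ≥
      (dCount w n : ℝ) * M ^ n / (Nat.factorial n : ℝ) := by
  have hzigzag : zigzag k = dCount (fun j => w (n + j)) k :=
    DescentWord.zigzag_eq_dCount fun j hj hjk => by
      have := hw (j + 1) (by omega) hjk
      rw [show n + (j + 1) - 1 = n + j by omega] at this
      rw [this]
      omega
  have hcount : dCount w n * zigzag k * (n + k).choose k ≤ 2 * dCount w (n + k) := by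
    rw [hzigzag, ← Nat.choose_symm_add]
    refine (DescentWord.dCount_mul_dCount_mul_choose_le w n k).trans
      (DescentWord.card_hasDescentWordExcept_le (by omega) hlast ?_ fun h => ?_)
    · simpa [show n - 1 + 1 = n by omega] using hw 1 le_rfl hk
    · simpa [show n - 1 + 2 = n + 1 by omega] using hw 2 (by omega) (by omega)
  have hcount' : (dCount w n : ℝ) * zigzag k * (n + k).choose k ≤ 2 * dCount w (n + k) := by
    exact_mod_cast hcount
  have hfact : ((n + k).choose k : ℝ) * n.factorial * k.factorial = (n + k).factorial := by
    exact_mod_cast Nat.add_choose_mul_factorial_mul_factorial n k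
  have hE' : 2 * (k.factorial : ℝ) ≤ zigzag k * M ^ k := by
    have := k.factorial_pos
    rw [ge_iff_le, mul_div_assoc', div_mul_eq_mul_div, le_div_iff₀ (by positivity)] at hE
    linarith
  rw [ge_iff_le, div_le_div_iff₀ (by positivity) (by positivity), ← hfact, pow_add]
  linarith [mul_le_mul_of_nonneg_left hE' (by positivity :
      (0 : ℝ) ≤ dCount w n * (n + k).choose k * n.factorial * M ^ n),
    mul_le_mul_of_nonneg_right hcount' (by positivity : (0 : ℝ) ≤ M ^ n * M ^ k * n.factorial)]
end

section
/- For every integer n ≥ 4, the number of permutations π of {1,…,n} whose set of peaks is exactly {2, n−1} equals 2^{n−3} · (n−4) · (n−1). -/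
/-!
A sequence without interior peaks decreases and then increases, so its maximum sits at one of
its two ends. Removing the maximum and recursing shows that the `k` elements of a linear order
can be arranged without peaks in `2 ^ (k - 1)` ways; choosing the first and/or last entry freely
then counts the permutations of `{1, …, n}` without peaks in a window of consecutive positions.
A permutation has peak set `{2, n - 1}` exactly when it has no peak at the positions
`3, …, n - 2` and peaks at `2` and `n - 1`, so inclusion–exclusion over the last two conditions
gives `n (n - 1) 2 ^ (n - 3) - 2 n 2 ^ (n - 2) + 2 ^ (n - 1) = 2 ^ (n - 3) (n - 4) (n - 1)`.
-/

/-- `IsPeak π i` says that the (1-based) position `i` is a peak of the permutation `π` of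
`{1,…,n}` (modeled as `Fin n`, zero-based): `2 ≤ i ≤ n-1` and `π(i-1) < π(i) > π(i+1)`. -/
def IsPeak {n : ℕ} (π : Equiv.Perm (Fin n)) (i : ℕ) : Prop :=
  ∃ (h2 : 2 ≤ i) (hn : i < n),
    π ⟨i - 2, by omega⟩ < π ⟨i - 1, by omega⟩ ∧ π ⟨i, hn⟩ < π ⟨i - 1, by omega⟩

open Function

def NoPeak {α : Type*} [LT α] {k : ℕ} (f : Fin k → α) : Prop :=
  ∀ i (h : i + 2 < k),
    ¬(f ⟨i, by omega⟩ < f ⟨i + 1, by omega⟩ ∧ f ⟨i + 2, h⟩ < f ⟨i + 1, by omega⟩)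

section NoPeak

variable {α β : Type*} [LinearOrder α] [LinearOrder β] {k : ℕ}

theorem noPeak_of_lt_three {f : Fin k → α} (hk : k < 3) : NoPeak f :=
  fun _ h => absurd h (by omega)

theorem StrictMono.noPeak_comp_iff {φ : α → β} (hφ : StrictMono φ) {f : Fin k → α} :
    NoPeak (φ ∘ f) ↔ NoPeak f := by
  simp only [NoPeak, comp_apply, hφ.lt_iff_lt]

theorem NoPeak.comp_rev {f : Fin k → α} (hf : NoPeak f) : NoPeak (f ∘ Fin.rev) := by
  intro i h ⟨hlt, hgt⟩
  refine hf (k - 3 - i) (by omega) ⟨?_, ?_⟩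
  · convert hgt using 2 <;> simp only [comp_apply] <;> congr 1 <;> ext <;> simp <;> omega
  · convert hlt using 2 <;> simp only [comp_apply] <;> congr 1 <;> ext <;> simp <;> omega

theorem noPeak_comp_rev_iff {f : Fin k → α} : NoPeak (f ∘ Fin.rev) ↔ NoPeak f :=
  ⟨fun h => by simpa [comp_assoc, Fin.rev_involutive.comp_self] using h.comp_rev,
    NoPeak.comp_rev⟩

theorem NoPeak.comp_succ {f : Fin (k + 1) → α} (hf : NoPeak f) : NoPeak (f ∘ Fin.succ) :=
  fun i _ => hf (i + 1) (by omega)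

theorem noPeak_iff_comp_succ_of_forall_le {f : Fin (k + 1) → α} (hmax : ∀ j, f j ≤ f 0) :
    NoPeak f ↔ NoPeak (f ∘ Fin.succ) := by
  refine ⟨NoPeak.comp_succ, fun hf i h ⟨hlt, hgt⟩ => ?_⟩
  cases i with
  | zero => exact (hmax _).not_gt hlt
  | succ i => exact hf i (by omega) ⟨hlt, hgt⟩

theorem NoPeak.eq_zero_or_eq_last_of_forall_le {f : Fin (k + 2) → α} (hf : NoPeak f)
    (hinj : Injective f) {p : Fin (k + 2)} (hmax : ∀ j, f j ≤ f p) :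
    p = 0 ∨ p = Fin.last (k + 1) := by
  by_contra! hp
  obtain ⟨_ | i, hi⟩ := p
  · exact hp.1 (Fin.ext (by simp))
  have hik : i + 2 < k + 2 := by
    have := hp.2; rw [Ne, Fin.ext_iff] at this; simp at this; omega
  refine hf i hik ⟨(hmax _).lt_of_ne fun h => ?_, (hmax _).lt_of_ne fun h => ?_⟩ <;>
    simpa using hinj h

theorem noPeak_iff_of_forall_le (e : Fin (k + 2) ≃ α) {M : α} (hM : ∀ x, x ≤ M) :
    NoPeak e ↔ (NoPeak (e ∘ Fin.succ) ∧ e 0 = M) ∨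
      (NoPeak ((e ∘ Fin.rev) ∘ Fin.succ) ∧ (e ∘ Fin.rev) 0 = M) := by
  refine ⟨fun he => ?_, ?_⟩
  · have hmax : ∀ j, e j ≤ e (e.symm M) := by simpa using fun j => hM (e j)
    rcases he.eq_zero_or_eq_last_of_forall_le e.injective hmax with h | h
    · exact .inl ⟨he.comp_succ, by simp [← h]⟩
    · exact .inr ⟨he.comp_rev.comp_succ, by simp [← h]⟩
  · rintro (⟨he, h0⟩ | ⟨he, h0⟩)
    · exact (noPeak_iff_comp_succ_of_forall_le fun _ => h0 ▸ hM _).2 he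
    · exact noPeak_comp_rev_iff.1 ((noPeak_iff_comp_succ_of_forall_le fun _ => h0 ▸ hM _).2 he)

end NoPeak

section Counting

variable {α : Type*} {k : ℕ}

theorem card_subtype_comp_rev (P : (Fin k → α) → Prop) :
    Nat.card {e : Fin k ≃ α // P (e ∘ Fin.rev)} = Nat.card {e : Fin k ≃ α // P e} :=
  Nat.card_congr <| (Equiv.equivCongr Fin.revPerm (Equiv.refl α)).subtypeEquiv fun _ => Iff.rfl

theorem card_subtype_comp_succ_and_apply_zero (Q : (Fin k → α) → Prop) (v : α) :
    Nat.card {f : Fin (k + 1) ≃ α // Q (f ∘ Fin.succ) ∧ f 0 = v} =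
      Nat.card {g : Fin k ≃ {x // x ≠ v} // Q (Subtype.val ∘ g)} := by
  classical
  let e : {f : Fin (k + 1) ≃ α // f 0 = v} ≃ (Fin k ≃ {x // x ≠ v}) :=
    ((Equiv.equivCongr (finSuccEquiv k) (Equiv.refl α)).subtypeEquiv (by simp)).trans
      (Equiv.optionSubtype v)
  rw [← Nat.card_congr (Equiv.subtypeEquivRight fun _ => and_comm),
    ← Nat.card_congr (Equiv.subtypeSubtypeEquivSubtypeInter _ _)]
  exact Nat.card_congr <| e.subtypeEquiv fun _ => Iff.rfl

theorem card_subtype_comp_succ [Fintype α] (Q : (Fin k → α) → Prop) {c : ℕ}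
    (hc : ∀ v, Nat.card {g : Fin k ≃ {x // x ≠ v} // Q (Subtype.val ∘ g)} = c) :
    Nat.card {f : Fin (k + 1) ≃ α // Q (f ∘ Fin.succ)} = Fintype.card α * c := by
  rw [← Nat.card_congr <|
      Equiv.sigmaFiberEquiv fun f : {f : Fin (k + 1) ≃ α // Q (f ∘ Fin.succ)} => f.1 0,
    Nat.card_sigma, Finset.sum_congr rfl fun v _ =>
      (Nat.card_congr <|
        Equiv.subtypeSubtypeEquivSubtypeInter _ fun f : Fin (k + 1) ≃ α => f 0 = v).trans <|
        (card_subtype_comp_succ_and_apply_zero Q v).trans (hc v)]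
  simp

theorem card_and_add_card_and_not [Finite α] (p q : α → Prop) :
    Nat.card {x // p x ∧ q x} + Nat.card {x // p x ∧ ¬q x} = Nat.card {x // p x} := by
  classical
  rw [← Nat.card_congr (Equiv.subtypeSubtypeEquivSubtypeInter p q),
    ← Nat.card_congr (Equiv.subtypeSubtypeEquivSubtypeInter p (¬q ·)), ← Nat.card_sum,
    Nat.card_congr (Equiv.sumCompl _)]

theorem card_and_and_inclusion_exclusion [Finite α] (p q r : α → Prop) :
    Nat.card {x // p x ∧ q x ∧ r x} + Nat.card {x // p x ∧ ¬q x} +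
        Nat.card {x // p x ∧ ¬r x} =
      Nat.card {x // p x} + Nat.card {x // p x ∧ ¬q x ∧ ¬r x} := by
  have hpq := card_and_add_card_and_not p q
  have hpqr := card_and_add_card_and_not (fun x => p x ∧ q x) r
  have hprq := card_and_add_card_and_not (fun x => p x ∧ ¬r x) q
  simp only [and_assoc] at hpqr hprq
  have hcomm₁ : Nat.card {x // p x ∧ ¬r x ∧ q x} = Nat.card {x // p x ∧ q x ∧ ¬r x} :=
    Nat.card_congr (Equiv.subtypeEquivRight fun _ => by tauto)
  have hcomm₂ :
      Nat.card {x // p x ∧ ¬r x ∧ ¬q x} = Nat.card {x // p x ∧ ¬q x ∧ ¬r x} :=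
    Nat.card_congr (Equiv.subtypeEquivRight fun _ => by tauto)
  omega

end Counting

section CardNoPeak

variable {α : Type*} [LinearOrder α] {k : ℕ}

theorem card_noPeak_eq_two_mul {M : α} (hM : ∀ x, x ≤ M) :
    Nat.card {e : Fin (k + 2) ≃ α // NoPeak e} =
      2 * Nat.card {g : Fin (k + 1) ≃ {x // x ≠ M} // NoPeak g} := by
  classical
  have hdisj : Disjoint (fun e : Fin (k + 2) ≃ α => NoPeak (e ∘ Fin.succ) ∧ e 0 = M)
      (fun e => NoPeak ((e ∘ Fin.rev) ∘ Fin.succ) ∧ (e ∘ Fin.rev) 0 = M) := by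
    refine Pi.disjoint_iff.2 fun e => Prop.disjoint_iff.2 fun ⟨⟨_, h0⟩, _, hl⟩ => ?_
    have := e.injective (h0.trans hl.symm)
    simp [Fin.ext_iff] at this
  rw [Nat.card_congr (Equiv.subtypeEquivRight (noPeak_iff_of_forall_le · hM)),
    Nat.card_congr (subtypeOrEquiv _ _ hdisj), Nat.card_sum,
    card_subtype_comp_rev (fun f => NoPeak (f ∘ Fin.succ) ∧ f 0 = M), ← two_mul,
    card_subtype_comp_succ_and_apply_zero]
  exact congrArg _ <| Nat.card_congr <|
    Equiv.subtypeEquivRight fun _ => (Subtype.strictMono_coe _).noPeak_comp_iff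

theorem card_noPeak : ∀ {k : ℕ} {α : Type*} [LinearOrder α] [Fintype α],
    Fintype.card α = k → Nat.card {e : Fin k ≃ α // NoPeak e} = 2 ^ (k - 1)
  | k + 2, α, _, _, hα => by
    have : Nonempty α := Fintype.card_pos_iff.1 (by omega)
    obtain ⟨M, hM⟩ := Finite.exists_max (id : α → α)
    rw [card_noPeak_eq_two_mul hM, card_noPeak (by simp [hα])]
    simp [pow_succ, mul_comm]
  | 0, α, _, _, hα | 1, α, _, _, hα => by
    rw [Nat.card_congr (Equiv.subtypeUnivEquiv fun _ => noPeak_of_lt_three (by omega)),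
      Nat.card_eq_fintype_card, Fintype.card_equiv (Fintype.equivFinOfCardEq hα).symm]
    rfl

variable [Fintype α]

theorem card_noPeak_comp_succ (hα : Fintype.card α = k + 1) :
    Nat.card {f : Fin (k + 1) ≃ α // NoPeak (f ∘ Fin.succ)} = (k + 1) * 2 ^ (k - 1) := by
  rw [card_subtype_comp_succ _ fun v => ?_, hα]
  rw [Nat.card_congr (Equiv.subtypeEquivRight fun _ => (Subtype.strictMono_coe _).noPeak_comp_iff),
    card_noPeak (by simp [hα])]

theorem card_noPeak_comp_castSucc (hα : Fintype.card α = k + 1) :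
    Nat.card {f : Fin (k + 1) ≃ α // NoPeak (f ∘ Fin.castSucc)} = (k + 1) * 2 ^ (k - 1) := by
  have hrev (f : Fin (k + 1) ≃ α) :
      (f ∘ Fin.rev) ∘ Fin.castSucc = (f ∘ Fin.succ) ∘ Fin.rev := by
    ext j; simp [Fin.rev_castSucc]
  calc _ = Nat.card {f : Fin (k + 1) ≃ α // NoPeak ((f ∘ Fin.rev) ∘ Fin.castSucc)} :=
        (card_subtype_comp_rev fun f => NoPeak (f ∘ Fin.castSucc)).symm
    _ = _ := Nat.card_congr <| Equiv.subtypeEquivRight fun f => by rw [hrev, noPeak_comp_rev_iff]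
    _ = _ := card_noPeak_comp_succ hα

theorem card_noPeak_comp_succ_comp_castSucc (hα : Fintype.card α = k + 2) :
    Nat.card {f : Fin (k + 2) ≃ α // NoPeak (f ∘ Fin.succ ∘ Fin.castSucc)} =
      (k + 2) * ((k + 1) * 2 ^ (k - 1)) := by
  calc _ = Fintype.card α * ((k + 1) * 2 ^ (k - 1)) :=
        card_subtype_comp_succ (fun g => NoPeak (g ∘ Fin.castSucc)) fun v => ?_
    _ = _ := by rw [hα]
  exact (Nat.card_congr <| Equiv.subtypeEquivRight fun g : Fin (k + 1) ≃ {x // x ≠ v} =>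
    (Subtype.strictMono_coe _).noPeak_comp_iff (f := g ∘ Fin.castSucc)).trans
    (card_noPeak_comp_castSucc (by simp [hα]))

end CardNoPeak

theorem IsPeak.two_le_and_lt {n : ℕ} {π : Equiv.Perm (Fin n)} {i : ℕ} (h : IsPeak π i) :
    2 ≤ i ∧ i < n :=
  ⟨h.1, h.2.1⟩

section NoPeakIn

variable {n : ℕ} (π : Equiv.Perm (Fin n))

def NoPeakIn (a b : ℕ) : Prop :=
  ∀ i, a ≤ i → i < b → ¬IsPeak π i

variable {π}

theorem noPeakIn_iff_left {a b : ℕ} (h : a < b) :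
    NoPeakIn π a b ↔ ¬IsPeak π a ∧ NoPeakIn π (a + 1) b := by
  refine ⟨fun hπ => ⟨hπ a le_rfl h, fun i hi hib => hπ i (by omega) hib⟩,
    fun ⟨ha, hπ⟩ i hi hib => ?_⟩
  rcases hi.eq_or_lt with rfl | hi
  exacts [ha, hπ i hi hib]

theorem noPeakIn_iff_right {a b : ℕ} (h : a ≤ b) :
    NoPeakIn π a (b + 1) ↔ NoPeakIn π a b ∧ ¬IsPeak π b := by
  refine ⟨fun hπ => ⟨fun i hai hi => hπ i hai (by omega), hπ b h (by omega)⟩,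
    fun ⟨hπ, hb⟩ i hai hi => ?_⟩
  rcases (Nat.lt_succ_iff.1 hi).eq_or_lt with rfl | hi
  exacts [hb, hπ i hai hi]

theorem forall_isPeak_iff_eq_two_or_eq_sub_one_iff :
    (∀ i, IsPeak π i ↔ (i = 2 ∨ i = n - 1)) ↔
      NoPeakIn π 3 (n - 1) ∧ IsPeak π 2 ∧ IsPeak π (n - 1) := by
  refine ⟨fun h => ⟨fun i h₁ h₂ hi => ?_, (h 2).2 (.inl rfl), (h _).2 (.inr rfl)⟩,
    fun ⟨h, h₂, h₃⟩ i => ⟨fun hi => ?_, ?_⟩⟩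
  · have := (h i).1 hi; omega
  · have := hi.two_le_and_lt; by_contra; exact h i (by omega) (by omega) hi
  · rintro (rfl | rfl); exacts [h₂, h₃]

/-- `IsPeak` counts positions from `1`, so the window's index `i` is the position `i + s + 1`. -/
theorem noPeak_window_iff {k s : ℕ} (h : k + s ≤ n) :
    NoPeak (fun j : Fin k => π ⟨j + s, by omega⟩) ↔ NoPeakIn π (s + 2) (k + s) := by
  constructor
  · rintro hπ i hi hik ⟨_, _, hlt, hgt⟩
    refine hπ (i - s - 2) (by omega) ⟨?_, ?_⟩
    · convert hlt using 3 <;> dsimp only <;> omega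
    · convert hgt using 3 <;> dsimp only <;> omega
  · rintro hπ i hi ⟨hlt, hgt⟩
    refine hπ (i + s + 2) (by omega) (by omega) ⟨by omega, by omega, ?_, ?_⟩
    · convert hlt using 3 <;> dsimp only <;> omega
    · convert hgt using 3 <;> dsimp only <;> omega

end NoPeakIn

theorem card_noPeakIn {n k s : ℕ} (h : k + s ≤ n) :
    Nat.card {π : Equiv.Perm (Fin n) // NoPeakIn π (s + 2) (k + s)} =
      Nat.card {π : Equiv.Perm (Fin n) // NoPeak (fun j : Fin k => π ⟨j + s, by omega⟩)} :=
  Nat.card_congr (Equiv.subtypeEquivRight fun _ => (noPeak_window_iff h).symm)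

theorem stmt14 (n : ℕ) (hn : 4 ≤ n) :
    Nat.card {π : Equiv.Perm (Fin n) // ∀ i : ℕ, IsPeak π i ↔ (i = 2 ∨ i = n - 1)} =
      2 ^ (n - 3) * (n - 4) * (n - 1) := by
  obtain ⟨m, rfl⟩ : ∃ m, n = m + 4 := ⟨n - 4, by omega⟩
  have hleft (π : Equiv.Perm (Fin (m + 4))) :
      NoPeakIn π 2 (m + 3) ↔ NoPeakIn π 3 (m + 3) ∧ ¬IsPeak π 2 :=
    (noPeakIn_iff_left (by omega)).trans and_comm
  have hboth (π : Equiv.Perm (Fin (m + 4))) :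
      NoPeakIn π 2 (m + 4) ↔
        NoPeakIn π 3 (m + 3) ∧ ¬IsPeak π 2 ∧ ¬IsPeak π (m + 3) := by
    rw [noPeakIn_iff_right (by omega), hleft, and_assoc]
  have hS : Nat.card {π : Equiv.Perm (Fin (m + 4)) // NoPeakIn π 3 (m + 3)} =
      (m + 4) * ((m + 3) * 2 ^ (m + 1)) :=
    (card_noPeakIn (k := m + 2) (s := 1) (by omega)).trans
      (card_noPeak_comp_succ_comp_castSucc (by simp))
  have hA : Nat.card {π : Equiv.Perm (Fin (m + 4)) // NoPeakIn π 2 (m + 3)} =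
      (m + 4) * 2 ^ (m + 2) :=
    (card_noPeakIn (k := m + 3) (s := 0) (by omega)).trans (card_noPeak_comp_castSucc (by simp))
  have hB : Nat.card {π : Equiv.Perm (Fin (m + 4)) // NoPeakIn π 3 (m + 4)} =
      (m + 4) * 2 ^ (m + 2) :=
    (card_noPeakIn (k := m + 3) (s := 1) (by omega)).trans (card_noPeak_comp_succ (by simp))
  have hAB : Nat.card {π : Equiv.Perm (Fin (m + 4)) // NoPeakIn π 2 (m + 4)} = 2 ^ (m + 3) :=
    (card_noPeakIn (k := m + 4) (s := 0) (by omega)).trans (card_noPeak (by simp))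
  have hIE := card_and_and_inclusion_exclusion (fun π : Equiv.Perm (Fin (m + 4)) =>
    NoPeakIn π 3 (m + 3)) (IsPeak · 2) (IsPeak · (m + 3))
  rw [← Nat.card_congr (Equiv.subtypeEquivRight hleft), hA,
    ← Nat.card_congr (Equiv.subtypeEquivRight fun π => noPeakIn_iff_right (by omega)), hB,
    ← Nat.card_congr (Equiv.subtypeEquivRight hboth), hAB, hS] at hIE
  rw [Nat.card_congr <| Equiv.subtypeEquivRight fun _ =>
      forall_isPeak_iff_eq_two_or_eq_sub_one_iff,
    show m + 4 - 1 = m + 3 by omega, show m + 4 - 3 = m + 1 by omega, show m + 4 - 4 = m by omega]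
  rw [pow_succ 2 (m + 2), pow_succ 2 (m + 1)] at hIE
  linarith
end

section
/- For every integer n ≥ 4, the number of permutations π of {1,…,n} whose set of peaks is exactly {2} equals 2^{n−2} · (n−2). -/
set_option linter.unusedVariables false
set_option linter.unusedSectionVars false

namespace Stmt15Aux

open Finset

variable {n : ℕ}

lemma fin_mk_eq {p q : ℕ} (hp : p < n) (hq : q < n) (h : p = q) :
    (⟨p, hp⟩ : Fin n) = ⟨q, hq⟩ := by subst h; rfl

lemma erase_nonempty (hn : 2 ≤ n) (a : Fin n) : (univ.erase a).Nonempty := by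
  rw [← Finset.card_pos, Finset.card_erase_of_mem (mem_univ a), Finset.card_univ,
    Fintype.card_fin]
  omega

/-- the minimum of the complement of `{a}`. -/
def mu (a : Fin n) : Fin n :=
  if h : (univ.erase a).Nonempty then (univ.erase a).min' h else a

lemma mu_le (hn : 2 ≤ n) {a x : Fin n} (hx : x ≠ a) : mu a ≤ x := by
  rw [mu, dif_pos (erase_nonempty hn a)]
  exact Finset.min'_le _ _ (Finset.mem_erase.2 ⟨hx, mem_univ x⟩)

lemma mu_ne (hn : 2 ≤ n) (a : Fin n) : mu a ≠ a := by
  rw [mu, dif_pos (erase_nonempty hn a)]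
  have := Finset.min'_mem (univ.erase a) (erase_nonempty hn a)
  exact (Finset.mem_erase.1 this).1

/-- The decoding function: `a` at position 0, then the elements of `s` in decreasing
order, then the rest in increasing order. -/
def decFun (a : Fin n) (s : Finset (Fin n)) : Fin n → Fin n := fun p =>
  if h1 : (p : ℕ) = 0 then a
  else if h2 : (p : ℕ) ≤ s.card then
    s.orderEmbOfFin rfl ⟨s.card - (p : ℕ), by omega⟩
  else if h3 : (p : ℕ) - s.card - 1 < (univ \ insert a s).card then
    (univ \ insert a s).orderEmbOfFin rfl ⟨(p : ℕ) - s.card - 1, h3⟩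
  else a

section Decode

variable {a : Fin n} {s : Finset (Fin n)}

lemma ccard (ha : a ∉ s) : (univ \ insert a s).card = n - (s.card + 1) := by
  rw [Finset.card_sdiff_of_subset (Finset.subset_univ _), Finset.card_insert_of_notMem ha,
    Finset.card_univ, Fintype.card_fin]

lemma decFun_zero (a : Fin n) (s : Finset (Fin n)) (h0 : 0 < n) :
    decFun a s ⟨0, h0⟩ = a := by simp [decFun]

lemma decFun_desc (a : Fin n) (s : Finset (Fin n)) {p : ℕ} (h1 : 1 ≤ p) (h2 : p ≤ s.card)
    (hp : p < n) (hb : s.card - p < s.card) :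
    decFun a s ⟨p, hp⟩ = s.orderEmbOfFin rfl ⟨s.card - p, hb⟩ := by
  simp only [decFun]
  rw [dif_neg (by omega), dif_pos h2]

lemma decFun_asc (a : Fin n) (s : Finset (Fin n)) {p : ℕ} (h1 : s.card < p) (hp : p < n)
    (hb : p - s.card - 1 < (univ \ insert a s).card) :
    decFun a s ⟨p, hp⟩ = (univ \ insert a s).orderEmbOfFin rfl ⟨p - s.card - 1, hb⟩ := by
  simp only [decFun]
  rw [dif_neg (by omega), dif_neg (by omega), dif_pos hb]

lemma ha_not (hsub : s ⊆ univ \ {a, mu a}) : a ∉ s := fun h => by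
  have := hsub h; simp [Finset.mem_sdiff] at this

lemma hmu_not (hsub : s ⊆ univ \ {a, mu a}) : mu a ∉ s := fun h => by
  have := hsub h; simp [Finset.mem_sdiff] at this

lemma hcard_le (hn4 : 2 ≤ n) (hsub : s ⊆ univ \ {a, mu a}) : s.card ≤ n - 2 := by
  have h1 : ({a, mu a} : Finset (Fin n)).card = 2 := by
    rw [Finset.card_insert_of_notMem (by simp [Ne.symm (mu_ne hn4 a)]),
      Finset.card_singleton]
  have h2 := Finset.card_le_card hsub
  rw [Finset.card_sdiff_of_subset (Finset.subset_univ _), h1, Finset.card_univ, Fintype.card_fin] at h2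
  exact h2

lemma decFun_mem_desc (a : Fin n) (s : Finset (Fin n)) {p : ℕ} (h1 : 1 ≤ p) (h2 : p ≤ s.card)
    (hp : p < n) : decFun a s ⟨p, hp⟩ ∈ s := by
  rw [decFun_desc a s h1 h2 hp (by omega)]
  exact Finset.orderEmbOfFin_mem _ _ _

lemma decFun_mem_asc (a : Fin n) (s : Finset (Fin n)) (ha : a ∉ s) (hkn : s.card ≤ n - 2)
    {p : ℕ} (h1 : s.card < p) (hp : p < n) :
    decFun a s ⟨p, hp⟩ ∈ univ \ insert a s := by
  have hb : p - s.card - 1 < (univ \ insert a s).card := by rw [ccard ha]; omega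
  rw [decFun_asc a s h1 hp hb]
  exact Finset.orderEmbOfFin_mem _ _ _

lemma decFun_inj (hn4 : 4 ≤ n) (ha : a ∉ s) (hkn : s.card ≤ n - 2) :
    Function.Injective (decFun a s) := by
  have key : ∀ p q : Fin n, decFun a s p = decFun a s q → (p : ℕ) ≤ (q : ℕ) → p = q := by
    intro p q hpq hle
    have hpn : (p : ℕ) < n := p.isLt
    have hqn : (q : ℕ) < n := q.isLt
    have hp' : p = ⟨(p : ℕ), hpn⟩ := rfl
    have hq' : q = ⟨(q : ℕ), hqn⟩ := rfl
    rcases Nat.lt_or_ge (p : ℕ) 1 with hp0 | hp1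
    · have hp0' : (p : ℕ) = 0 := by omega
      have h0 : decFun a s p = a := by
        have hP : (⟨(p : ℕ), hpn⟩ : Fin n) = ⟨0, by omega⟩ := Fin.ext hp0'
        rw [hp', hP]; exact decFun_zero a s (by omega)
      rcases Nat.lt_or_ge (q : ℕ) 1 with hq0 | hq1
      · exact Fin.ext (by omega)
      rcases Nat.lt_or_ge s.card (q : ℕ) with hq2 | hq2
      · have hm := decFun_mem_asc a s ha hkn hq2 hqn
        rw [← hq', ← hpq, h0, Finset.mem_sdiff] at hm
        exact absurd (Finset.mem_insert_self a s) hm.2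
      · have hm := decFun_mem_desc a s hq1 hq2 hqn
        rw [← hq', ← hpq, h0] at hm
        exact absurd hm ha
    rcases Nat.lt_or_ge s.card (p : ℕ) with hp2 | hp2
    · -- both in asc region
      have hq2 : s.card < (q : ℕ) := lt_of_lt_of_le hp2 hle
      have hbp : (p : ℕ) - s.card - 1 < (univ \ insert a s).card := by rw [ccard ha]; omega
      have hbq : (q : ℕ) - s.card - 1 < (univ \ insert a s).card := by rw [ccard ha]; omega
      rw [hp', hq', decFun_asc a s hp2 hpn hbp, decFun_asc a s hq2 hqn hbq] at hpq
      have h2 := congrArg Fin.val (((univ \ insert a s).orderEmbOfFin rfl).injective hpq)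
      simp only at h2
      exact Fin.ext (by omega)
    · -- p in desc region
      rcases Nat.lt_or_ge s.card (q : ℕ) with hq2 | hq2
      · have hmp := decFun_mem_desc a s hp1 hp2 hpn
        have hmq := decFun_mem_asc a s ha hkn hq2 hqn
        rw [← hp'] at hmp; rw [← hq', ← hpq, Finset.mem_sdiff] at hmq
        exact absurd (Finset.mem_insert_of_mem hmp) hmq.2
      · have hq1 : 1 ≤ (q : ℕ) := by omega
        rw [hp', hq', decFun_desc a s hp1 hp2 hpn (by omega),
          decFun_desc a s hq1 hq2 hqn (by omega)] at hpq
        have h2 := congrArg Fin.val ((s.orderEmbOfFin rfl).injective hpq)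
        simp only at h2
        exact Fin.ext (by omega)
  intro p q hpq
  rcases Nat.le_total (p : ℕ) (q : ℕ) with h | h
  · exact key p q hpq h
  · exact (key q p hpq.symm h).symm

end Decode

section Decode2

variable {a : Fin n} {s : Finset (Fin n)}

lemma dec_lt_desc (a : Fin n) (s : Finset (Fin n)) {p q : ℕ} (h1 : 1 ≤ p) (hpq : p < q)
    (h2 : q ≤ s.card) (hp : p < n) (hq : q < n) :
    decFun a s ⟨q, hq⟩ < decFun a s ⟨p, hp⟩ := by
  rw [decFun_desc a s (by omega) h2 hq (by omega), decFun_desc a s h1 (by omega) hp (by omega)]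
  exact (s.orderEmbOfFin rfl).strictMono (Fin.mk_lt_mk.mpr (by omega))

lemma dec_lt_asc (ha : a ∉ s) (hkn : s.card ≤ n - 2) {p q : ℕ} (h1 : s.card < p)
    (hpq : p < q) (hq : q < n) (hp : p < n) :
    decFun a s ⟨p, hp⟩ < decFun a s ⟨q, hq⟩ := by
  have hbp : p - s.card - 1 < (univ \ insert a s).card := by rw [ccard ha]; omega
  have hbq : q - s.card - 1 < (univ \ insert a s).card := by rw [ccard ha]; omega
  rw [decFun_asc a s h1 hp hbp, decFun_asc a s (by omega) hq hbq]
  exact ((univ \ insert a s).orderEmbOfFin rfl).strictMono (Fin.mk_lt_mk.mpr (by omega))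

lemma dec_zero_lt_one (hex : ∃ x ∈ s, a < x) (hk1 : 1 ≤ s.card) (h0 : 0 < n) (h1 : 1 < n) :
    decFun a s ⟨0, h0⟩ < decFun a s ⟨1, h1⟩ := by
  rw [decFun_zero a s h0, decFun_desc a s le_rfl hk1 h1 (by omega)]
  obtain ⟨x, hx, hax⟩ := hex
  have : x ∈ Set.range (s.orderEmbOfFin rfl) := by
    rw [Finset.range_orderEmbOfFin]; exact hx
  obtain ⟨j, hj⟩ := this
  have hj2 : (j : ℕ) ≤ s.card - 1 := by have := j.isLt; omega
  calc a < x := hax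
    _ = s.orderEmbOfFin rfl j := hj.symm
    _ ≤ s.orderEmbOfFin rfl ⟨s.card - 1, by omega⟩ :=
        (s.orderEmbOfFin rfl).monotone (by rw [Fin.le_def]; simpa using hj2)

lemma dec_junction (hn2 : 2 ≤ n) (hsub : s ⊆ univ \ {a, mu a}) (hk1 : 1 ≤ s.card)
    (hx : s.card < n) (hx1 : s.card + 1 < n) :
    decFun a s ⟨s.card + 1, hx1⟩ < decFun a s ⟨s.card, hx⟩ := by
  have ha : a ∉ s := ha_not hsub
  have hb : s.card + 1 - s.card - 1 < (univ \ insert a s).card := by rw [ccard ha]; omega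
  rw [decFun_desc a s hk1 le_rfl hx (by omega), decFun_asc a s (by omega) hx1 hb]
  have h0s : (⟨s.card - s.card, by omega⟩ : Fin s.card) = ⟨0, by omega⟩ :=
    fin_mk_eq _ _ (by omega)
  have h0c : (⟨s.card + 1 - s.card - 1, hb⟩ : Fin (univ \ insert a s).card) =
      ⟨0, hb.trans_le' (by omega)⟩ := fin_mk_eq _ _ (by omega)
  rw [h0s, h0c, Finset.orderEmbOfFin_zero (s := s) rfl (by omega),
    Finset.orderEmbOfFin_zero (s := univ \ insert a s) rfl (hb.trans_le' (by omega))]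
  have hmS : s.min' (Finset.card_pos.mp (by omega)) ∈ s := Finset.min'_mem _ _
  have hmuc : mu a ∈ univ \ insert a s := by
    rw [Finset.mem_sdiff]
    exact ⟨mem_univ _, by simp [Finset.mem_insert, mu_ne hn2 a, hmu_not hsub]⟩
  calc (univ \ insert a s).min' _ ≤ mu a := Finset.min'_le _ _ hmuc
    _ < s.min' _ := lt_of_le_of_ne
        (mu_le hn2 (fun h => ha (h ▸ hmS)))
        (fun h => hmu_not hsub (h ▸ hmS))

/-- the decoded permutation -/
noncomputable def decPerm (hn4 : 4 ≤ n) (ha : a ∉ s) (hkn : s.card ≤ n - 2) :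
    Equiv.Perm (Fin n) :=
  Equiv.ofBijective (decFun a s) (Finite.injective_iff_bijective.1 (decFun_inj hn4 ha hkn))

lemma decPerm_apply (hn4 : 4 ≤ n) (ha : a ∉ s) (hkn : s.card ≤ n - 2) (p : Fin n) :
    decPerm hn4 ha hkn p = decFun a s p := rfl

theorem dec_peaks (hn4 : 4 ≤ n) (hsub : s ⊆ univ \ {a, mu a}) (hex : ∃ x ∈ s, a < x)
    (π : Equiv.Perm (Fin n)) (hπ : ∀ p : Fin n, π p = decFun a s p) :
    ∀ i : ℕ, IsPeak π i ↔ i = 2 := by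
  have ha : a ∉ s := ha_not hsub
  have hkn : s.card ≤ n - 2 := hcard_le (by omega) hsub
  have hk1 : 1 ≤ s.card := by
    obtain ⟨x, hx, _⟩ := hex; exact Finset.card_pos.2 ⟨x, hx⟩
  intro i
  constructor
  · rintro ⟨h2, hiN, hA, hD⟩
    by_contra hne
    have hi3 : 3 ≤ i := by omega
    rcases Nat.lt_or_ge s.card (i - 1) with hc | hc
    · -- ascending region : contradiction with hD
      have := dec_lt_asc ha hkn hc (show i - 1 < i by omega) hiN (by omega)
      rw [← hπ, ← hπ] at this
      exact absurd hD (not_lt.2 this.le)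
    · -- descending region : contradiction with hA
      have := dec_lt_desc a s (p := i - 2) (q := i - 1) (by omega) (by omega) hc
        (by omega) (by omega)
      rw [← hπ, ← hπ] at this
      exact absurd hA (not_lt.2 this.le)
  · rintro rfl
    refine ⟨le_rfl, by omega, ?_, ?_⟩
    · show π ⟨0, by omega⟩ < π ⟨1, by omega⟩
      rw [hπ, hπ]
      exact dec_zero_lt_one hex hk1 (by omega) (by omega)
    · show π ⟨2, by omega⟩ < π ⟨1, by omega⟩
      rw [hπ, hπ]
      rcases Nat.lt_or_ge 1 s.card with hk2 | hk2
      · exact dec_lt_desc a s le_rfl (by omega) hk2 (by omega) (by omega)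
      · have hk : s.card = 1 := by omega
        have := dec_junction (by omega) hsub hk1 (by omega) (by omega)
        have e1 : (⟨s.card + 1, by omega⟩ : Fin n) = ⟨2, by omega⟩ := fin_mk_eq _ _ (by omega)
        have e2 : (⟨s.card, by omega⟩ : Fin n) = ⟨1, by omega⟩ := fin_mk_eq _ _ (by omega)
        rwa [e1, e2] at this

end Decode2

section Encode

variable {π : Equiv.Perm (Fin n)}

lemma perm_succ_lt (hπ : ∀ i : ℕ, IsPeak π i ↔ i = 2) {q : ℕ} (h1 : 1 ≤ q)
    (h2 : q + 2 < n) (h : π ⟨q, by omega⟩ < π ⟨q + 1, by omega⟩) :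
    π ⟨q + 1, by omega⟩ < π ⟨q + 2, h2⟩ := by
  by_contra h'
  have hne : π ⟨q + 2, h2⟩ ≠ π ⟨q + 1, by omega⟩ := fun hh => by
    have := congrArg Fin.val (π.injective hh); simp at this
  have hlt : π ⟨q + 2, h2⟩ < π ⟨q + 1, by omega⟩ := lt_of_le_of_ne (not_lt.1 h') hne
  have hpk : IsPeak π (q + 2) := ⟨by omega, h2, h, hlt⟩
  have := (hπ (q + 2)).1 hpk
  omega

lemma asc_stable (hπ : ∀ i : ℕ, IsPeak π i ↔ i = 2) (d : ℕ) {q : ℕ} (h1 : 1 ≤ q)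
    (hd : q + d + 1 < n) (h : π ⟨q, by omega⟩ < π ⟨q + 1, by omega⟩) :
    π ⟨q + d, by omega⟩ < π ⟨q + d + 1, hd⟩ := by
  induction d with
  | zero => exact h
  | succ m ih =>
    have hprev : π ⟨q + m, by omega⟩ < π ⟨q + m + 1, by omega⟩ := ih (by omega) h
    exact perm_succ_lt hπ (by omega) (by omega : (q + m) + 2 < n) hprev

lemma gen_desc_chain (π : Equiv.Perm (Fin n)) (T : ℕ) (hT : T < n)
    (hD : ∀ q (hq1 : 1 ≤ q) (hq2 : q + 1 ≤ T), π ⟨q + 1, by omega⟩ < π ⟨q, by omega⟩) :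
    ∀ q p (h1 : 1 ≤ p) (h2 : p < q) (hq : q ≤ T), π ⟨q, by omega⟩ < π ⟨p, by omega⟩ := by
  intro q
  induction q with
  | zero => intro p h1 h2 h3; exact absurd h2 (by omega)
  | succ m ih =>
    intro p h1 hpq hqT
    rcases Nat.lt_or_ge p m with hm | hm
    · exact lt_trans (hD m (by omega) (by omega)) (ih p h1 hm (by omega))
    · have hpm : p = m := by omega
      subst hpm
      exact hD p h1 (by omega)

lemma gen_asc_chain (π : Equiv.Perm (Fin n)) (B T : ℕ) (hT : T < n)
    (hA : ∀ q (hq1 : B ≤ q) (hq2 : q + 1 ≤ T), π ⟨q, by omega⟩ < π ⟨q + 1, by omega⟩) :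
    ∀ q p (h1 : B ≤ p) (h2 : p < q) (hq : q ≤ T), π ⟨p, by omega⟩ < π ⟨q, by omega⟩ := by
  intro q
  induction q with
  | zero => intro p h1 h2 h3; exact absurd h2 (by omega)
  | succ m ih =>
    intro p h1 hpq hqT
    rcases Nat.lt_or_ge p m with hm | hm
    · exact lt_trans (ih p h1 hm (by omega)) (hA m (by omega) (by omega))
    · have hpm : p = m := by omega
      subst hpm
      exact hA p h1 (by omega)

end Encode

/-- The parameter space: a first value `a`, and the set `s` of values on the descending run. -/
noncomputable def dec (hn4 : 4 ≤ n)
    (x : (a : Fin n) × {s : Finset (Fin n) // s ⊆ univ \ {a, mu a} ∧ ∃ y ∈ s, a < y}) :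
    {π : Equiv.Perm (Fin n) // ∀ i : ℕ, IsPeak π i ↔ i = 2} :=
  ⟨decPerm hn4 (ha_not x.2.2.1) (hcard_le (by omega) x.2.2.1),
    dec_peaks hn4 x.2.2.1 x.2.2.2 _ (decPerm_apply hn4 _ _)⟩

section Inj

variable {a : Fin n} {s : Finset (Fin n)}

lemma decFun_mu (hn2 : 2 ≤ n) (hsub : s ⊆ univ \ {a, mu a}) (hk1 : 1 ≤ s.card)
    (h : s.card + 1 < n) : decFun a s ⟨s.card + 1, h⟩ = mu a := by
  have ha := ha_not hsub
  have hb : s.card + 1 - s.card - 1 < (univ \ insert a s).card := by rw [ccard ha]; omega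
  rw [decFun_asc a s (by omega) h hb]
  have h0c : (⟨s.card + 1 - s.card - 1, hb⟩ : Fin (univ \ insert a s).card) =
      ⟨0, hb.trans_le' (by omega)⟩ := fin_mk_eq _ _ (by omega)
  rw [h0c, Finset.orderEmbOfFin_zero (s := univ \ insert a s) rfl (hb.trans_le' (by omega))]
  apply le_antisymm
  · refine Finset.min'_le _ _ (Finset.mem_sdiff.2 ⟨mem_univ _, ?_⟩)
    simp only [Finset.mem_insert, not_or]
    exact ⟨mu_ne hn2 a, hmu_not hsub⟩
  · have hmem := Finset.min'_mem (univ \ insert a s) (Finset.card_pos.mp (by rw [ccard ha]; omega))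
    rw [Finset.mem_sdiff] at hmem
    exact mu_le hn2 (fun hh => hmem.2 (by rw [hh]; exact Finset.mem_insert_self a s))

lemma decFun_surj_desc (a : Fin n) (s : Finset (Fin n)) (hkn : s.card ≤ n - 2)
    (hn2 : 2 ≤ n) : ∀ x ∈ s, ∃ (p : ℕ) (h1 : 1 ≤ p) (h2 : p ≤ s.card) (hp : p < n),
      decFun a s ⟨p, hp⟩ = x := by
  intro x hx
  have : x ∈ Set.range (s.orderEmbOfFin rfl) := by
    rw [Finset.range_orderEmbOfFin]; exact hx
  obtain ⟨j, hj⟩ := this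
  have hjl := j.isLt
  refine ⟨s.card - (j : ℕ), by omega, by omega, by omega, ?_⟩
  rw [decFun_desc a s (by omega) (by omega) (by omega) (by omega)]
  have e : (⟨s.card - (s.card - (j : ℕ)), by omega⟩ : Fin s.card) = j := by
    apply Fin.ext; simp; omega
  rw [e, hj]

lemma dec_inj (hn4 : 4 ≤ n) : Function.Injective (dec (n := n) hn4) := by
  rintro ⟨a, s, hsub, hex⟩ ⟨a', s', hsub', hex'⟩ h
  have h2n : 2 ≤ n := by omega
  have hfun : ∀ p : Fin n, decFun a s p = decFun a' s' p := by
    intro p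
    have h2 := congrArg (fun z : {π : Equiv.Perm (Fin n) // ∀ i : ℕ, IsPeak π i ↔ i = 2} =>
      z.1 p) h
    exact h2
  have hk1 : 1 ≤ s.card := Finset.card_pos.2 ⟨hex.choose, hex.choose_spec.1⟩
  have hk1' : 1 ≤ s'.card := Finset.card_pos.2 ⟨hex'.choose, hex'.choose_spec.1⟩
  have hkn := hcard_le h2n hsub
  have hkn' := hcard_le h2n hsub'
  have haa : a = a' := by
    have h3 := hfun ⟨0, by omega⟩
    rwa [decFun_zero, decFun_zero] at h3
  subst haa
  have hμ1 := decFun_mu h2n hsub hk1 (by omega)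
  have hμ2 := decFun_mu h2n hsub' hk1' (by omega)
  have hkk : s.card = s'.card := by
    have h4 : decFun a s ⟨s.card + 1, by omega⟩ = decFun a s ⟨s'.card + 1, by omega⟩ := by
      rw [hμ1, hfun ⟨s'.card + 1, by omega⟩, hμ2]
    have h5 := congrArg Fin.val (decFun_inj hn4 (ha_not hsub) hkn h4)
    simp at h5
    omega
  have hss : s = s' := by
    apply Finset.Subset.antisymm <;> intro x hx
    · obtain ⟨p, h1, h2, hp, hval⟩ := decFun_surj_desc a s hkn h2n x hx
      rw [hfun ⟨p, hp⟩] at hval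
      rw [← hval]
      exact decFun_mem_desc a s' h1 (by omega) hp
    · obtain ⟨p, h1, h2, hp, hval⟩ := decFun_surj_desc a s' hkn' h2n x hx
      rw [← hfun ⟨p, hp⟩] at hval
      rw [← hval]
      exact decFun_mem_desc a s h1 (by omega) hp
  subst hss
  rfl

end Inj

lemma dec_surj (hn4 : 4 ≤ n) : Function.Surjective (dec (n := n) hn4) := by
  rintro ⟨π, hπ⟩
  have h2n : 2 ≤ n := by omega
  obtain ⟨hdum1, hdum2, hA2, hD2⟩ := (hπ 2).2 rfl
  have h01 : π ⟨0, by omega⟩ < π ⟨1, by omega⟩ := hA2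
  have h21 : π ⟨2, by omega⟩ < π ⟨1, by omega⟩ := hD2
  obtain ⟨a, ha_def⟩ : ∃ a, π ⟨0, (by omega : 0 < n)⟩ = a := ⟨_, rfl⟩
  have hμa : mu a ≠ a := mu_ne h2n a
  obtain ⟨t, hπt⟩ : ∃ t : Fin n, π t = mu a := ⟨π.symm (mu a), π.apply_symm_apply _⟩
  have hμ_le : ∀ p : Fin n, (p : ℕ) ≠ 0 → mu a ≤ π p := by
    intro p hp
    refine mu_le h2n (fun h => hp ?_)
    have h2 := congrArg Fin.val (π.injective (h.trans ha_def.symm))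
    simpa using h2
  have ht0 : (t : ℕ) ≠ 0 := by
    intro h
    have he : t = ⟨0, by omega⟩ := Fin.ext h
    rw [he] at hπt
    exact hμa (hπt.symm.trans ha_def)
  have ht2 : 2 ≤ (t : ℕ) := by
    rcases Nat.lt_or_ge (t : ℕ) 2 with h | h
    · exfalso
      have h1 : (t : ℕ) = 1 := by omega
      have he : t = ⟨1, by omega⟩ := Fin.ext h1
      rw [he] at hπt
      have hle : mu a ≤ π ⟨2, by omega⟩ := hμ_le _ (by simp)
      have : mu a < mu a := by
        calc mu a ≤ π ⟨2, by omega⟩ := hle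
          _ < π ⟨1, by omega⟩ := h21
          _ = mu a := hπt
      exact lt_irrefl _ this
    · exact h
  have htn : (t : ℕ) < n := t.isLt
  have stepT : ∀ q (hq : (t : ℕ) ≤ q) (hq1 : q + 1 < n),
      π ⟨q, by omega⟩ < π ⟨q + 1, by omega⟩ := by
    intro q hq hq1
    have base : π ⟨(t : ℕ), by omega⟩ < π ⟨(t : ℕ) + 1, by omega⟩ := by
      have e : (⟨(t : ℕ), by omega⟩ : Fin n) = t := Fin.ext rfl
      have hne : mu a ≠ π ⟨(t : ℕ) + 1, by omega⟩ := by
        intro h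
        have h2 := congrArg Fin.val (π.injective (hπt.trans h))
        simp at h2
      calc π ⟨(t : ℕ), by omega⟩ = mu a := by rw [e]; exact hπt
        _ < π ⟨(t : ℕ) + 1, by omega⟩ :=
            lt_of_le_of_ne (hμ_le _ (by simp)) hne
    have has := asc_stable hπ (q - (t : ℕ)) (q := (t : ℕ)) (by omega) (by omega) base
    have e1 : (⟨(t : ℕ) + (q - (t : ℕ)), by omega⟩ : Fin n) = ⟨q, by omega⟩ :=
      fin_mk_eq _ _ (by omega)
    have e2 : (⟨(t : ℕ) + (q - (t : ℕ)) + 1, by omega⟩ : Fin n) = ⟨q + 1, by omega⟩ :=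
      fin_mk_eq _ _ (by omega)
    calc π ⟨q, by omega⟩ = π ⟨(t : ℕ) + (q - (t : ℕ)), by omega⟩ := (congrArg π e1).symm
      _ < π ⟨(t : ℕ) + (q - (t : ℕ)) + 1, by omega⟩ := has
      _ = π ⟨q + 1, by omega⟩ := congrArg π e2
  have stepD : ∀ q (h1 : 1 ≤ q) (hq : q < (t : ℕ)),
      π ⟨q + 1, by omega⟩ < π ⟨q, by omega⟩ := by
    intro q h1 hq
    have hne : π ⟨q + 1, by omega⟩ ≠ π ⟨q, by omega⟩ := by
      intro h
      have h3 := congrArg Fin.val (π.injective h)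
      simp at h3
    rcases lt_or_gt_of_ne hne with hlt | hgt
    · exact hlt
    · exfalso
      have has := asc_stable hπ ((t : ℕ) - 1 - q) (q := q) h1 (by omega) hgt
      have e1 : (⟨q + ((t : ℕ) - 1 - q), by omega⟩ : Fin n) = ⟨(t : ℕ) - 1, by omega⟩ :=
        fin_mk_eq _ _ (by omega)
      have e2 : (⟨q + ((t : ℕ) - 1 - q) + 1, by omega⟩ : Fin n) = t := by
        apply Fin.ext; simp; omega
      have hkey : π ⟨(t : ℕ) - 1, by omega⟩ < mu a := by
        calc π ⟨(t : ℕ) - 1, by omega⟩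
            = π ⟨q + ((t : ℕ) - 1 - q), by omega⟩ := (congrArg π e1).symm
          _ < π ⟨q + ((t : ℕ) - 1 - q) + 1, by omega⟩ := has
          _ = π t := congrArg π e2
          _ = mu a := hπt
      exact absurd hkey (not_lt.2 (hμ_le _ (by simp; omega)))
  have D2 := gen_desc_chain π (t : ℕ) htn (fun q hq1 hq2 => stepD q hq1 (by omega))
  have A2 := gen_asc_chain π (t : ℕ) (n - 1) (by omega) (fun q hq1 hq2 => stepT q hq1 (by omega))
  have hbound : ∀ m ∈ Finset.Ico 1 (t : ℕ), m < n := fun m hm => by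
    have h5 := Finset.mem_Ico.1 hm; omega
  obtain ⟨s, hs_def⟩ : ∃ s, ((Finset.Ico 1 (t : ℕ)).attachFin hbound).image π = s := ⟨_, rfl⟩
  have hmem_s : ∀ x : Fin n, x ∈ s ↔ ∃ p : Fin n, (1 ≤ (p : ℕ) ∧ (p : ℕ) < (t : ℕ)) ∧ π p = x := by
    intro x
    rw [← hs_def, Finset.mem_image]
    constructor
    · rintro ⟨p, hp, rfl⟩
      rw [Finset.mem_attachFin, Finset.mem_Ico] at hp
      exact ⟨p, hp, rfl⟩
    · rintro ⟨p, hp, rfl⟩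
      exact ⟨p, by rw [Finset.mem_attachFin, Finset.mem_Ico]; exact hp, rfl⟩
  have hk : s.card = (t : ℕ) - 1 := by
    rw [← hs_def, Finset.card_image_of_injective _ π.injective, Finset.card_attachFin,
      Nat.card_Ico]
  have hsub : s ⊆ univ \ {a, mu a} := by
    intro x hx
    obtain ⟨p, ⟨hp1, hp2⟩, rfl⟩ := (hmem_s x).1 hx
    rw [Finset.mem_sdiff]
    refine ⟨mem_univ _, ?_⟩
    simp only [Finset.mem_insert, Finset.mem_singleton, not_or]
    constructor
    · intro h
      have h2 := congrArg Fin.val (π.injective (h.trans ha_def.symm))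
      simp at h2
      omega
    · intro h
      have h2 := congrArg Fin.val (π.injective (h.trans hπt.symm))
      omega
  have hex : ∃ y ∈ s, a < y := by
    refine ⟨π ⟨1, by omega⟩, (hmem_s _).2 ⟨⟨1, by omega⟩, ⟨by simp, by simp; omega⟩, rfl⟩, ?_⟩
    rw [← ha_def]; exact h01
  refine ⟨⟨a, s, hsub, hex⟩, ?_⟩
  apply Subtype.ext
  apply Equiv.ext
  intro p
  obtain ⟨P, hP⟩ := p
  show decFun a s ⟨P, hP⟩ = π ⟨P, hP⟩
  have hkn : s.card ≤ n - 2 := hcard_le h2n hsub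
  have hans : a ∉ s := ha_not hsub
  rcases Nat.lt_or_ge P 1 with h0 | h1
  · have hP0 : P = 0 := by omega
    subst hP0
    rw [decFun_zero]; exact ha_def.symm
  rcases Nat.lt_or_ge s.card P with hasc | hdesc
  · -- ascending region
    have hccard : (univ \ insert a s).card = n - (t : ℕ) := by
      rw [ccard hans]; omega
    have hembc : ∀ j : Fin (univ \ insert a s).card,
        (univ \ insert a s).orderEmbOfFin rfl j
          = π ⟨(t : ℕ) + (j : ℕ), by have := j.isLt; omega⟩ := by
      have hm : ∀ j : Fin (univ \ insert a s).card,
          π ⟨(t : ℕ) + (j : ℕ), by have := j.isLt; omega⟩ ∈ univ \ insert a s := by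
        intro j
        have hjl := j.isLt
        rw [Finset.mem_sdiff]
        refine ⟨mem_univ _, ?_⟩
        simp only [Finset.mem_insert, not_or]
        constructor
        · intro h
          have h2 := congrArg Fin.val (π.injective (h.trans ha_def.symm))
          simp at h2
          omega
        · intro h
          obtain ⟨p', ⟨hp1, hp2⟩, hval⟩ := (hmem_s _).1 h
          have h2 := congrArg Fin.val (π.injective hval)
          simp at h2
          omega
      have hmono : StrictMono (fun j : Fin (univ \ insert a s).card =>
          π ⟨(t : ℕ) + (j : ℕ), by have := j.isLt; omega⟩) := by
        intro j j' hjj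
        have hv : (j : ℕ) < (j' : ℕ) := hjj
        have hjl' := j'.isLt
        exact A2 ((t : ℕ) + (j' : ℕ)) ((t : ℕ) + (j : ℕ)) (by omega) (by omega) (by omega)
      intro j
      rw [← Finset.orderEmbOfFin_unique (rfl) hm hmono]
    have hb : P - s.card - 1 < (univ \ insert a s).card := by rw [hccard]; omega
    rw [decFun_asc a s hasc hP hb, hembc ⟨P - s.card - 1, hb⟩]
    refine congrArg _ (Fin.ext ?_)
    simp
    omega
  · -- descending region
    have hembs : ∀ j : Fin s.card,
        s.orderEmbOfFin rfl j = π ⟨(t : ℕ) - 1 - (j : ℕ), by omega⟩ := by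
      have hm : ∀ j : Fin s.card, π ⟨(t : ℕ) - 1 - (j : ℕ), by omega⟩ ∈ s := by
        intro j
        have hjl := j.isLt
        refine (hmem_s _).2 ⟨⟨(t : ℕ) - 1 - (j : ℕ), by omega⟩, ⟨?_, ?_⟩, rfl⟩
        · simp; omega
        · simp; omega
      have hmono : StrictMono (fun j : Fin s.card =>
          π ⟨(t : ℕ) - 1 - (j : ℕ), by omega⟩) := by
        intro j j' hjj
        have hv : (j : ℕ) < (j' : ℕ) := hjj
        have hjl' := j'.isLt
        exact D2 ((t : ℕ) - 1 - (j : ℕ)) ((t : ℕ) - 1 - (j' : ℕ)) (by omega) (by omega) (by omega)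
      intro j
      rw [← Finset.orderEmbOfFin_unique (rfl) hm hmono]
    rw [decFun_desc a s h1 hdesc hP (by omega), hembs ⟨s.card - P, by omega⟩]
    refine congrArg _ (Fin.ext ?_)
    simp
    omega

section Count

lemma Ucard (hn2 : 2 ≤ n) (a : Fin n) : (univ \ {a, mu a} : Finset (Fin n)).card = n - 2 := by
  rw [Finset.card_sdiff_of_subset (Finset.subset_univ _), Finset.card_univ, Fintype.card_fin,
    Finset.card_insert_of_notMem (by simp [Ne.symm (mu_ne hn2 a)]), Finset.card_singleton]

lemma muval (hn2 : 2 ≤ n) (a : Fin n) (ha : (a : ℕ) ≠ 0) : (mu a : ℕ) = 0 := by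
  have h := mu_le hn2 (a := a) (x := ⟨0, by omega⟩)
    (fun h => ha (by rw [← h]))
  have hv : (mu a : ℕ) ≤ 0 := h
  omega

lemma filter_le_card (hn2 : 2 ≤ n) (a : Fin n) :
    ((univ \ {a, mu a}).filter (fun x => x ≤ a)).card = (a : ℕ) - 1 := by
  rcases Nat.eq_zero_or_pos (a : ℕ) with ha0 | hapos
  · have he : (univ \ {a, mu a}).filter (fun x => x ≤ a) = ∅ := by
      rw [Finset.eq_empty_iff_forall_notMem]
      intro x hx
      rw [Finset.mem_filter, Finset.mem_sdiff] at hx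
      obtain ⟨⟨_, hx2⟩, hx3⟩ := hx
      have hv : (x : ℕ) ≤ (a : ℕ) := hx3
      have hxa : x = a := Fin.ext (by omega)
      exact hx2 (by rw [hxa]; exact Finset.mem_insert_self a _)
    rw [he]
    simp
    omega
  · have hmu0 : (mu a : ℕ) = 0 := muval hn2 a (by omega)
    have hb : ∀ m ∈ Finset.Ico 1 (a : ℕ), m < n := fun m hm => by
      have h1 := Finset.mem_Ico.1 hm; have h2 := a.isLt; omega
    have he : (univ \ {a, mu a}).filter (fun x => x ≤ a)
        = (Finset.Ico 1 (a : ℕ)).attachFin hb := by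
      ext x
      rw [Finset.mem_filter, Finset.mem_sdiff, Finset.mem_attachFin, Finset.mem_Ico]
      simp only [Finset.mem_insert, Finset.mem_singleton, Finset.mem_univ, true_and, not_or]
      constructor
      · rintro ⟨⟨hxa, hxmu⟩, hxle⟩
        have h1 : (x : ℕ) ≠ (a : ℕ) := fun h => hxa (Fin.ext h)
        have h2 : (x : ℕ) ≠ 0 := fun h => hxmu (Fin.ext (by rw [h, hmu0]))
        have h3 : (x : ℕ) ≤ (a : ℕ) := hxle
        omega
      · rintro ⟨h1, h2⟩
        refine ⟨⟨fun h => ?_, fun h => ?_⟩, ?_⟩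
        · have h3 := congrArg Fin.val h; omega
        · have h3 := congrArg Fin.val h; rw [hmu0] at h3; omega
        · exact (Fin.le_def).2 (by omega)
    rw [he, Finset.card_attachFin, Nat.card_Ico]

lemma count_a (hn4 : 4 ≤ n) (a : Fin n) :
    (univ.filter (fun s : Finset (Fin n) => s ⊆ univ \ {a, mu a} ∧ ∃ y ∈ s, a < y)).card
      = 2 ^ (n - 2) - 2 ^ ((a : ℕ) - 1) := by
  have hn2 : 2 ≤ n := by omega
  have hUcard := Ucard hn2 a
  have hstep1 : univ.filter (fun s : Finset (Fin n) => s ⊆ univ \ {a, mu a} ∧ ∃ y ∈ s, a < y)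
      = (univ \ {a, mu a}).powerset.filter (fun s => ∃ y ∈ s, a < y) := by
    ext s
    rw [Finset.mem_filter, Finset.mem_filter, Finset.mem_powerset]
    simp only [Finset.mem_univ, true_and]
  have hstep3 : (univ \ {a, mu a}).powerset.filter (fun s => ¬ ∃ y ∈ s, a < y)
      = ((univ \ {a, mu a}).filter (fun x => x ≤ a)).powerset := by
    ext s
    rw [Finset.mem_filter, Finset.mem_powerset, Finset.mem_powerset]
    constructor
    · rintro ⟨hsub, hnex⟩
      intro x hx
      exact Finset.mem_filter.2 ⟨hsub hx, not_lt.1 (fun hlt => hnex ⟨x, hx, hlt⟩)⟩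
    · intro hss
      refine ⟨hss.trans (Finset.filter_subset _ _), ?_⟩
      rintro ⟨y, hy, hay⟩
      exact absurd (Finset.mem_filter.1 (hss hy)).2 (not_le.2 hay)
  have htot := Finset.card_filter_add_card_filter_not
    (s := (univ \ {a, mu a}).powerset) (p := fun s => ∃ y ∈ s, a < y)
  rw [Finset.card_powerset, hUcard, hstep3, Finset.card_powerset, filter_le_card hn2 a] at htot
  rw [hstep1]
  omega

lemma two_pow_sum (m : ℕ) : ∑ i ∈ Finset.range m, 2 ^ i = 2 ^ m - 1 := by
  induction m with
  | zero => simp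
  | succ m ih =>
    rw [Finset.sum_range_succ, ih]
    have h1 : 1 ≤ 2 ^ m := Nat.one_le_pow _ _ (by norm_num)
    have h2 : 2 ^ (m + 1) = 2 ^ m * 2 := pow_succ 2 m
    omega

lemma sum_final (hn4 : 4 ≤ n) :
    (∑ a : Fin n, (2 ^ (n - 2) - 2 ^ ((a : ℕ) - 1))) = 2 ^ (n - 2) * (n - 2) := by
  rw [Fin.sum_univ_eq_sum_range (fun j => 2 ^ (n - 2) - 2 ^ (j - 1)) n]
  have hpow : ∀ j ∈ Finset.range n, 2 ^ (j - 1) ≤ 2 ^ (n - 2) := by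
    intro j hj; rw [Finset.mem_range] at hj
    exact Nat.pow_le_pow_right (by omega) (by omega)
  have hsplit : (∑ j ∈ Finset.range n, (2 ^ (n - 2) - 2 ^ (j - 1)))
      + (∑ j ∈ Finset.range n, 2 ^ (j - 1)) = n * 2 ^ (n - 2) := by
    rw [← Finset.sum_add_distrib,
      Finset.sum_congr rfl (fun j hj => Nat.sub_add_cancel (hpow j hj)),
      Finset.sum_const, Finset.card_range, smul_eq_mul]
  have hgeom : (∑ j ∈ Finset.range n, 2 ^ (j - 1)) = 2 ^ (n - 1) := by
    obtain ⟨m, rfl⟩ : ∃ m, n = m + 1 := ⟨n - 1, by omega⟩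
    rw [Finset.sum_range_succ']
    simp only [Nat.add_sub_cancel, Nat.zero_sub, pow_zero]
    rw [two_pow_sum]
    have h1 : 1 ≤ 2 ^ m := Nat.one_le_pow _ _ (by norm_num)
    omega
  have hA2 : 2 ^ (n - 1) = 2 ^ (n - 2) * 2 := by
    rw [← pow_succ]
    congr 1
    omega
  have hmul : 2 ^ (n - 2) * (n - 2) + 2 ^ (n - 2) * 2 = 2 ^ (n - 2) * n := by
    rw [← Nat.mul_add]; congr 1; omega
  have hcomm : n * 2 ^ (n - 2) = 2 ^ (n - 2) * n := Nat.mul_comm _ _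
  omega

end Count

end Stmt15Aux

theorem stmt15 (n : ℕ) (hn : 4 ≤ n) :
    Nat.card {π : Equiv.Perm (Fin n) // ∀ i : ℕ, IsPeak π i ↔ i = 2} =
      2 ^ (n - 2) * (n - 2) := by
  classical
  have hcongr := Nat.card_congr
    (Equiv.ofBijective _ ⟨Stmt15Aux.dec_inj hn, Stmt15Aux.dec_surj hn⟩)
  rw [← hcongr, Nat.card_eq_fintype_card, Fintype.card_sigma]
  have hcard : ∀ a : Fin n,
      Fintype.card {s : Finset (Fin n) //
        s ⊆ Finset.univ \ {a, Stmt15Aux.mu a} ∧ ∃ y ∈ s, a < y}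
        = 2 ^ (n - 2) - 2 ^ ((a : ℕ) - 1) := by
    intro a
    rw [Fintype.card_subtype]
    exact Stmt15Aux.count_a hn a
  rw [Finset.sum_congr rfl (fun a _ => hcard a)]
  exact Stmt15Aux.sum_final hn
end

section
/- Let w be an infinite binary word with only finitely many indices i such that w_i = 1. Then the limit lim_{n→∞} (d_n(w)/n!)^{1/n} exists and equals 0. -/
/-!
If `w` has no letter `1` beyond position `N`, a permutation counted by `d_n(w)` increases from
position `N` on, so it is determined by its first `N` values and `d_n(w) ≤ n ^ N ≤ N! e ^ n`.
Since `c ^ n / n!` eventually drops below `δ ^ n` for every `δ > 0`, the `n`-th root of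
`d_n(w) / n!` tends to `0`.
-/

open Filter

open scoped Nat Topology

theorem StrictMonoOn.eqOn_of_image_eq {α β : Type*} [LinearOrder α] [WellFoundedLT α]
    [Preorder β] {f g : α → β} {s : Set α} (hf : StrictMonoOn f s) (hg : StrictMonoOn g s)
    (h : f '' s = g '' s) : s.EqOn f g := by
  rw [← Set.range_domRestrict, ← Set.range_domRestrict,
    hf.domRestrict.range_inj hg.domRestrict] at h
  exact fun x hx => congrFun h ⟨x, hx⟩

theorem Equiv.Perm.eq_of_eqOn_compl_of_strictMonoOn {α : Type*} [LinearOrder α]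
    [WellFoundedLT α] {σ τ : Equiv.Perm α} {s : Set α} (hσ : StrictMonoOn σ s)
    (hτ : StrictMonoOn τ s) (h : sᶜ.EqOn σ τ) : σ = τ := by
  have himage : σ '' s = τ '' s := by
    rw [← compl_inj_iff, ← Equiv.image_compl, ← Equiv.image_compl, h.image_eq]
  have hs := hσ.eqOn_of_image_eq hτ himage
  ext x
  by_cases hx : x ∈ s
  · rw [hs hx]
  · rw [h hx]

theorem Fin.strictMonoOn_of_lt_add_one {α : Type*} [Preorder α] {n : ℕ} (N : ℕ) {f : Fin n → α}
    (hf : ∀ i (h : i + 1 < n), N ≤ i → f ⟨i, by omega⟩ < f ⟨i + 1, h⟩) :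
    StrictMonoOn f {j | N ≤ (j : ℕ)} := by
  rintro ⟨a, ha⟩ (haN : N ≤ a) ⟨b, hb⟩ - (hab : a < b)
  induction b, hab using Nat.le_induction with
  | base => exact hf a hb haN
  | succ b hab ih => exact (ih (by omega)).trans (hf b hb (by omega))

theorem dCount_le_pow (w : ℕ → Bool) {N n : ℕ} (hN : N ∈ upperBounds {i | w i = true})
    (hn : N ≤ n) : dCount w n ≤ n ^ N := by
  have hincreasing : ∀ π : Equiv.Perm (Fin n), (∀ i : ℕ, ∀ h : i + 1 < n,
      (π ⟨i + 1, h⟩ < π ⟨i, Nat.lt_of_succ_lt h⟩ ↔ w (i + 1) = true)) →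
      StrictMonoOn π {j | N ≤ (j : ℕ)} := by
    intro π hπ
    refine Fin.strictMonoOn_of_lt_add_one N fun i h hi => ?_
    have hw : w (i + 1) ≠ true := fun hw => by have := hN hw; omega
    exact lt_of_le_of_ne (not_lt.1 ((hπ i h).not.2 hw))
      (π.injective.ne (by simp [Fin.ext_iff]))
  calc dCount w n ≤ Nat.card (Fin N → Fin n) :=
        Nat.card_le_card_of_injective (fun π j => π.1 (Fin.castLE hn j)) ?_
    _ = n ^ N := by simp
  rintro ⟨σ, hσ⟩ ⟨τ, hτ⟩ hστ
  exact Subtype.ext <| Equiv.Perm.eq_of_eqOn_compl_of_strictMonoOn (hincreasing σ hσ) (hincreasing τ hτ)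
    fun j hj => congrFun hστ ⟨j, not_le.1 hj⟩

theorem tendsto_rpow_one_div_of_eventually_le_pow {a : ℕ → ℝ} (ha : ∀ n, 0 ≤ a n)
    (h : ∀ δ > 0, ∀ᶠ n in atTop, a n ≤ δ ^ n) :
    Tendsto (fun n : ℕ => a n ^ (1 / (n : ℝ))) atTop (𝓝 0) := by
  refine tendsto_order.2 ⟨fun b hb => Eventually.of_forall fun n =>
    hb.trans_le (Real.rpow_nonneg (ha n) _), fun ε hε => ?_⟩
  filter_upwards [h (ε / 2) (by positivity), eventually_ge_atTop 1] with n hn hn1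
  calc a n ^ (1 / (n : ℝ)) ≤ ((ε / 2) ^ n) ^ (1 / (n : ℝ)) :=
        Real.rpow_le_rpow (ha n) hn (by positivity)
    _ = ε / 2 := by rw [one_div, Real.pow_rpow_inv_natCast (by positivity) (by omega)]
    _ < ε := half_lt_self hε

theorem eventually_mul_pow_div_factorial_le_pow (C c : ℝ) {δ : ℝ} (hδ : 0 < δ) :
    ∀ᶠ n in atTop, C * c ^ n / n ! ≤ δ ^ n := by
  have hlim := (FloorSemiring.tendsto_pow_div_factorial_atTop (c / δ)).const_mul C
  rw [mul_zero] at hlim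
  filter_upwards [hlim.eventually (ge_mem_nhds one_pos)] with n hn
  have hδn : 0 < δ ^ n := pow_pos hδ n
  rwa [div_pow, show C * (c ^ n / δ ^ n / n !) = C * c ^ n / n ! / δ ^ n by ring,
    div_le_one hδn] at hn

theorem stmt16 (w : ℕ → Bool) (hfin : {i : ℕ | w i = true}.Finite) :
    Tendsto (fun n : ℕ => ((dCount w n : ℝ) / (Nat.factorial n : ℝ)) ^ (1 / (n : ℝ)))
      atTop (nhds 0) := by
  obtain ⟨N, hN⟩ := hfin.bddAbove
  refine tendsto_rpow_one_div_of_eventually_le_pow (fun n => by positivity) fun δ hδ => ?_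
  filter_upwards [eventually_mul_pow_div_factorial_le_pow (N ! : ℝ) (Real.exp 1) hδ,
    eventually_ge_atTop N] with n hδn hNn
  calc (dCount w n : ℝ) / n ! ≤ (n : ℝ) ^ N / n ! := by
        gcongr; exact_mod_cast dCount_le_pow w hN hNn
    _ ≤ N ! * Real.exp 1 ^ n / n ! := by
        gcongr
        rw [Real.exp_one_pow, ← div_le_iff₀' (by positivity)]
        exact Real.pow_div_factorial_le_exp _ (Nat.cast_nonneg n) N
    _ ≤ δ ^ n := hδn
end
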